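/- arXiv:2304.03506 — 7 statements merged into one kernel-verified Lean document; each statement's English description precedes it below -/
import Mathlib

section
/- Let Ū : ℝ → ℝ be the inverse of u ↦ -u - u³, i.e. y = -Ū(y) - Ū(y)³ for all y. Then for every y ∈ ℝ: |Ū(y)| ≤ (1 + y²)^{1/6} and |Ū'(y)| ≤ (1 + y²)^{-1/3}. -/
/-!
`Ū` is a right inverse of the strictly decreasing map `u ↦ -u - u³`, so it is antitone and onto,
hence continuous, and the inverse function theorem gives `Ū'(y) = -(1 + 3u²)⁻¹` with `u = Ū(y)`.
Since `y² = u²(1 + u²)²`, both bounds reduce to the polynomial inequalities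
`u⁶ ≤ 1 + u²(1 + u²)² ≤ (1 + 3u²)³`.
-/

theorem Function.RightInverse.continuous_of_strictAnti {α β : Type*} [LinearOrder α]
    [TopologicalSpace α] [OrderTopology α] [DenselyOrdered α] [LinearOrder β]
    [TopologicalSpace β] [OrderTopology β] {f : α → β} {g : β → α}
    (hg : Function.RightInverse g f) (hf : StrictAnti f) : Continuous g := by
  have hanti : Antitone g := fun a b hab => hf.le_iff_ge.1 (by rwa [hg a, hg b])
  have hsurj : Function.Surjective g := fun x => ⟨f x, hf.injective (hg (f x))⟩
  exact continuous_ofDual.comp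
    (hanti.dual_right.continuous_of_surjective (OrderDual.toDual.surjective.comp hsurj))

theorem hasDerivAt_neg_sub_cube (u : ℝ) :
    HasDerivAt (fun u : ℝ => -u - u ^ 3) (-(1 + 3 * u ^ 2)) u :=
  ((hasDerivAt_id' u).neg.sub (hasDerivAt_pow 3 u)).congr_deriv (by norm_num; ring)

theorem strictAnti_neg_sub_cube : StrictAnti (fun u : ℝ => -u - u ^ 3) :=
  fun _ _ hab => by
    simp only
    linarith [(Odd.strictMono_pow (by decide : Odd 3)) hab]

theorem hasDerivAt_of_eq_neg_sub_cube {g : ℝ → ℝ} (hg : ∀ y, y = -g y - g y ^ 3) (y : ℝ) :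
    HasDerivAt g (-(1 + 3 * g y ^ 2))⁻¹ y := by
  have hinv : Function.RightInverse g (fun u : ℝ => -u - u ^ 3) := fun y => (hg y).symm
  refine HasDerivAt.of_local_left_inverse
    (hinv.continuous_of_strictAnti strictAnti_neg_sub_cube).continuousAt
    (hasDerivAt_neg_sub_cube _) ?_ (Filter.Eventually.of_forall hinv)
  nlinarith [sq_nonneg (g y)]

theorem pow_six_le_one_add_sq_neg_sub_cube (u : ℝ) : u ^ 6 ≤ 1 + (-u - u ^ 3) ^ 2 := by
  nlinarith [sq_nonneg u, sq_nonneg (u ^ 2)]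

theorem one_add_sq_neg_sub_cube_le (u : ℝ) : 1 + (-u - u ^ 3) ^ 2 ≤ (1 + 3 * u ^ 2) ^ 3 := by
  nlinarith [sq_nonneg u, sq_nonneg (u ^ 2), sq_nonneg (u ^ 3)]

theorem abs_le_one_add_sq_rpow_of_eq_neg_sub_cube {u y : ℝ} (hy : y = -u - u ^ 3) :
    |u| ≤ (1 + y ^ 2) ^ ((1 : ℝ) / 6) := by
  subst hy
  rw [one_div, Real.le_rpow_inv_iff_of_pos (abs_nonneg u) (by positivity) (by norm_num)]
  norm_num [pow_abs, Even.pow_abs ⟨3, rfl⟩, pow_six_le_one_add_sq_neg_sub_cube]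

theorem inv_one_add_three_sq_le_rpow_of_eq_neg_sub_cube {u y : ℝ} (hy : y = -u - u ^ 3) :
    (1 + 3 * u ^ 2)⁻¹ ≤ (1 + y ^ 2) ^ (-(1 : ℝ) / 3) := by
  subst hy
  rw [neg_div, Real.rpow_neg (by positivity), one_div]
  refine inv_anti₀ (by positivity) ?_
  rw [Real.rpow_inv_le_iff_of_pos (by positivity) (by positivity) (by norm_num)]
  exact_mod_cast one_add_sq_neg_sub_cube_le u

/-- Bounds for the self-similar Burgers profile `Ū` (the inverse of `u ↦ -u - u³`):
`|Ū(y)| ≤ (1 + y²)^{1/6}` and `|Ū'(y)| ≤ (1 + y²)^{-1/3}`. -/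
theorem selfsimilar_burgers_profile_bounds
    (Ubar : ℝ → ℝ) (hUbar : ∀ y : ℝ, y = -Ubar y - Ubar y ^ 3) :
    ∀ y : ℝ, |Ubar y| ≤ (1 + y ^ 2) ^ ((1 : ℝ) / 6) ∧
      |deriv Ubar y| ≤ (1 + y ^ 2) ^ (-(1 : ℝ) / 3) := by
  intro y
  have hderiv : |deriv Ubar y| = (1 + 3 * Ubar y ^ 2)⁻¹ := by
    rw [(hasDerivAt_of_eq_neg_sub_cube hUbar y).deriv, abs_inv, abs_neg,
      abs_of_pos (by positivity)]
  rw [hderiv]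
  exact ⟨abs_le_one_add_sq_rpow_of_eq_neg_sub_cube (hUbar y),
    inv_one_add_three_sq_le_rpow_of_eq_neg_sub_cube (hUbar y)⟩
end

section
/- Let W̄(y) = ⟨y̌⟩^{1/2} Ū(⟨y̌⟩^{-3/2} y₁) with ⟨y̌⟩ = 1 + y₂² + y₃² and Ū the inverse of u ↦ -u - u³, and let η(y) = 1 + y₁² + (y₂² + y₃²)³. Then there is a constant C > 0 such that for all y ∈ ℝ³ and μ, ν ∈ {2, 3}: |W̄(y)| ≤ C η(y)^{1/6}, |∂₁W̄(y)| ≤ C η(y)^{-1/3}, |∂_μW̄(y)| ≤ C, |∂₁²W̄(y)| ≤ C η(y)^{-1/2}, |∂₁∂_μW̄(y)| ≤ C η(y)^{-1/3}, and |∂_μ∂_νW̄(y)| ≤ C η(y)^{-1/6}. -/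
/-!
`Ū` inverts the strictly decreasing cubic `u ↦ -u - u³`, so it is continuous with
`Ū' = -(1 + 3Ū²)⁻¹`. Every derivative of `W̄` up to order two is a transverse monomial times
`⟨y̌⟩^r Φ(ζ)`, `ζ = ⟨y̌⟩^{-3/2} y₁`: the derivative `∂₁` turns `(r, Φ)` into `(r - 3/2, Φ')`, and
`∂_μ` (μ = 2, 3) produces `y_μ ⟨y̌⟩^{r-1} (2rΦ - 3ζΦ')`. The cubic relation `ζ = -u - u³`,
`u = Ū(ζ)`, makes each `Φ` a rational function of `u` bounded by a multiple of `(1 + 3u²)^b`,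
while `|y_μ| ≤ ⟨y̌⟩^{1/2}`. Finally `η ≤ ⟨y̌⟩³ (1 + ζ²) ≤ (⟨y̌⟩ (1 + 3u²))³`, so
`⟨y̌⟩^a (1 + 3u²)^b ≤ η^e` whenever `a, b ≤ 3e ≤ 0`. The bound on `W̄` itself is
`|W̄|⁶ = ⟨y̌⟩³ u⁶ ≤ ⟨y̌⟩³ ζ² = y₁² ≤ η`.
-/

namespace BurgersProfile

section CubicInverse

variable {U : ℝ → ℝ}

theorem strictAnti_neg_sub_cube {R : Type*} [Ring R] [LinearOrder R] [IsStrictOrderedRing R] :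
    StrictAnti fun u : R => -u - u ^ 3 := fun _ _ hab =>
  sub_lt_sub (neg_lt_neg hab) (Odd.strictMono_pow (by decide) hab)

variable (hU : ∀ z, z = -U z - U z ^ 3)
include hU

theorem antitone_of_cubic_inverse : Antitone U := fun z₁ z₂ h => by
  rw [hU z₁, hU z₂] at h
  exact strictAnti_neg_sub_cube.le_iff_ge.1 h

theorem continuous_of_cubic_inverse : Continuous U := by
  have hsurj : Function.Surjective fun z => -U z := fun v =>
    ⟨-(-v) - (-v) ^ 3, by
      simp only [neg_eq_iff_eq_neg]
      exact strictAnti_neg_sub_cube.injective (hU _).symm⟩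
  exact continuous_neg_iff.1 ((antitone_of_cubic_inverse hU).neg.continuous_of_surjective hsurj)

theorem hasDerivAt_of_cubic_inverse (z : ℝ) : HasDerivAt U (-(1 + 3 * U z ^ 2)⁻¹) z := by
  have hf : HasDerivAt (fun u : ℝ => -u - u ^ 3) (-(1 + 3 * U z ^ 2)) (U z) := by
    refine ((hasDerivAt_id (U z)).neg.sub (hasDerivAt_pow 3 (U z))).congr_deriv ?_
    norm_num
    ring
  have := HasDerivAt.of_local_left_inverse (continuous_of_cubic_inverse hU).continuousAt hf
    (by nlinarith [sq_nonneg (U z)]) (Filter.Eventually.of_forall fun y => (hU y).symm)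
  rwa [inv_neg] at this

theorem hasDerivAt_one_add_sq_of_cubic_inverse (z : ℝ) :
    HasDerivAt (fun z => 1 + 3 * U z ^ 2) (-6 * U z / (1 + 3 * U z ^ 2)) z := by
  refine ((((hasDerivAt_pow 2 (U z)).comp z (hasDerivAt_of_cubic_inverse hU z)).const_mul
    3).const_add 1).congr_deriv ?_
  simp only [Nat.cast_ofNat]
  field_simp
  ring

theorem hasDerivAt_neg_inv_one_add_sq_of_cubic_inverse (z : ℝ) :
    HasDerivAt (fun z => -(1 + 3 * U z ^ 2)⁻¹) (-6 * U z / (1 + 3 * U z ^ 2) ^ 3) z := by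
  have hw : 1 + 3 * U z ^ 2 ≠ 0 := by positivity
  refine ((hasDerivAt_one_add_sq_of_cubic_inverse hU z).inv hw).neg.congr_deriv ?_
  field_simp

theorem hasDerivAt_div_one_add_sq_of_cubic_inverse (z : ℝ) :
    HasDerivAt (fun z => -2 * U z / (1 + 3 * U z ^ 2))
      ((2 - 6 * U z ^ 2) / (1 + 3 * U z ^ 2) ^ 3) z := by
  have hw : 1 + 3 * U z ^ 2 ≠ 0 := by positivity
  refine (((hasDerivAt_of_cubic_inverse hU z).const_mul (-2)).div
    (hasDerivAt_one_add_sq_of_cubic_inverse hU z) hw).congr_deriv ?_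
  field_simp
  ring

theorem scaling_combination_profile (z : ℝ) :
    2 * (1 / 2) * U z - 3 * z * -(1 + 3 * U z ^ 2)⁻¹ = -2 * U z / (1 + 3 * U z ^ 2) := by
  have hz := hU z
  generalize U z = u at hz ⊢
  subst hz
  field_simp
  ring

theorem scaling_combination_transverse (z : ℝ) :
    2 * (-1 / 2) * (-2 * U z / (1 + 3 * U z ^ 2))
      - 3 * z * ((2 - 6 * U z ^ 2) / (1 + 3 * U z ^ 2) ^ 3) = 8 * U z / (1 + 3 * U z ^ 2) ^ 3 := by
  have hz := hU z
  generalize U z = u at hz ⊢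
  subst hz
  field_simp
  ring

theorem one_add_sq_le_of_cubic_inverse (z : ℝ) : 1 + z ^ 2 ≤ (1 + 3 * U z ^ 2) ^ 3 := by
  have hz := hU z
  generalize U z = u at hz ⊢
  subst hz
  nlinarith [sq_nonneg u, sq_nonneg (u ^ 2), sq_nonneg (u ^ 3)]

theorem pow_six_le_sq_of_cubic_inverse (z : ℝ) : U z ^ 6 ≤ z ^ 2 := by
  have hz := hU z
  generalize U z = u at hz ⊢
  subst hz
  nlinarith [sq_nonneg u, sq_nonneg (u ^ 2)]

end CubicInverse

theorem abs_div_pow_le_rpow (u : ℝ) (n : ℕ) :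
    |u| / (1 + 3 * u ^ 2) ^ n ≤ (1 + 3 * u ^ 2) ^ ((1 : ℝ) / 2 - n) := by
  have hw : 0 < 1 + 3 * u ^ 2 := by positivity
  rw [Real.rpow_sub hw, Real.rpow_natCast, ← Real.sqrt_eq_rpow]
  gcongr
  exact Real.abs_le_sqrt (by nlinarith [sq_nonneg u])

theorem abs_neg_inv_one_add_sq (u : ℝ) :
    |-(1 + 3 * u ^ 2)⁻¹| ≤ 1 * (1 + 3 * u ^ 2) ^ (-1 : ℝ) := by
  rw [abs_neg, abs_inv, abs_of_pos (by positivity), Real.rpow_neg_one, one_mul]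

theorem abs_mul_div_one_add_sq_le (c u : ℝ) :
    |c * u / (1 + 3 * u ^ 2)| ≤ |c| * (1 + 3 * u ^ 2) ^ (-(1 : ℝ) / 2) := by
  calc _ = |c| * (|u| / (1 + 3 * u ^ 2) ^ 1) := by
        rw [abs_div, abs_mul, abs_of_pos (by positivity : (0 : ℝ) < 1 + 3 * u ^ 2), pow_one,
          mul_div_assoc]
    _ ≤ |c| * (1 + 3 * u ^ 2) ^ ((1 : ℝ) / 2 - (1 : ℕ)) := by
        gcongr; exact abs_div_pow_le_rpow u 1
    _ = _ := by norm_num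

theorem abs_mul_div_one_add_sq_pow_three_le (c u : ℝ) :
    |c * u / (1 + 3 * u ^ 2) ^ 3| ≤ |c| * (1 + 3 * u ^ 2) ^ (-(5 : ℝ) / 2) := by
  calc _ = |c| * (|u| / (1 + 3 * u ^ 2) ^ 3) := by
        rw [abs_div, abs_mul, abs_of_pos (by positivity : (0 : ℝ) < (1 + 3 * u ^ 2) ^ 3),
          mul_div_assoc]
    _ ≤ |c| * (1 + 3 * u ^ 2) ^ ((1 : ℝ) / 2 - (3 : ℕ)) := by
        gcongr; exact abs_div_pow_le_rpow u 3
    _ = _ := by norm_num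

theorem abs_two_sub_div_one_add_sq_pow_three_le (u : ℝ) :
    |(2 - 6 * u ^ 2) / (1 + 3 * u ^ 2) ^ 3| ≤ 2 * (1 + 3 * u ^ 2) ^ (-(2 : ℝ)) := by
  have hw : 0 < 1 + 3 * u ^ 2 := by positivity
  have h : |2 - 6 * u ^ 2| ≤ 2 * (1 + 3 * u ^ 2) := abs_le.2 ⟨by nlinarith, by nlinarith⟩
  calc _ = |2 - 6 * u ^ 2| / (1 + 3 * u ^ 2) ^ 3 := by rw [abs_div, abs_of_pos (pow_pos hw 3)]
    _ ≤ 2 * (1 + 3 * u ^ 2) / (1 + 3 * u ^ 2) ^ 3 := by gcongr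
    _ = _ := by rw [Real.rpow_neg hw.le, Real.rpow_two]; field_simp

noncomputable def partialDeriv {ι : Type*} [Fintype ι] [DecidableEq ι] (i : ι)
    (f : (ι → ℝ) → ℝ) (y : ι → ℝ) : ℝ :=
  fderiv ℝ f y (Pi.single i 1)

theorem partialDeriv_coord_mul {ι : Type*} [Fintype ι] [DecidableEq ι] {f : (ι → ℝ) → ℝ}
    {y : ι → ℝ} (hf : DifferentiableAt ℝ f y) (i j : ι) :
    partialDeriv j (fun y => y i * f y) y
      = (Pi.single j 1 : ι → ℝ) i * f y + y i * partialDeriv j f y := by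
  rw [partialDeriv, fderiv_fun_mul (hasFDerivAt_apply i y).differentiableAt hf,
    (hasFDerivAt_apply i y).fderiv, partialDeriv]
  simp only [add_apply, smul_apply, ContinuousLinearMap.proj_apply, smul_eq_mul]
  ring

theorem abs_single_one_apply_le {ι : Type*} [DecidableEq ι] (i j : ι) :
    |(Pi.single j 1 : ι → ℝ) i| ≤ 1 := by
  rw [Pi.single_apply]
  split_ifs <;> simp

-- Coordinates are 0-indexed: `y 0, y 1, y 2` are the paper's `y₁, y₂, y₃`; `bracket y` is `⟨y̌⟩`
-- and `scaledCoord y` is `ζ`.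
def bracket (y : Fin 3 → ℝ) : ℝ := 1 + y 1 ^ 2 + y 2 ^ 2

noncomputable def scaledCoord (y : Fin 3 → ℝ) : ℝ := bracket y ^ (-(3 : ℝ) / 2) * y 0

noncomputable def selfSimilar (r : ℝ) (Φ : ℝ → ℝ) (y : Fin 3 → ℝ) : ℝ :=
  bracket y ^ r * Φ (scaledCoord y)

def weight (y : Fin 3 → ℝ) : ℝ := 1 + y 0 ^ 2 + (y 1 ^ 2 + y 2 ^ 2) ^ 3

local notation "π" i => (ContinuousLinearMap.proj i : (Fin 3 → ℝ) →L[ℝ] ℝ)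

theorem one_le_bracket (y : Fin 3 → ℝ) : 1 ≤ bracket y := by
  unfold bracket
  nlinarith [sq_nonneg (y 1), sq_nonneg (y 2)]

theorem bracket_pos (y : Fin 3 → ℝ) : 0 < bracket y := one_pos.trans_le (one_le_bracket y)

theorem hasFDerivAt_bracket (y : Fin 3 → ℝ) :
    HasFDerivAt bracket ((2 * y 1) • (π 1) + (2 * y 2) • π 2) y := by
  have h₁ := (hasDerivAt_pow 2 (y 1)).comp_hasFDerivAt y (hasFDerivAt_apply (𝕜 := ℝ) 1 y)
  have h₂ := (hasDerivAt_pow 2 (y 2)).comp_hasFDerivAt y (hasFDerivAt_apply (𝕜 := ℝ) 2 y)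
  refine ((h₁.const_add 1).add h₂).congr_fderiv ?_
  ext v
  simp

section SelfSimilar

variable {r : ℝ} {Φ Φ' Ψ : ℝ → ℝ}

theorem hasFDerivAt_selfSimilar (hΦ : ∀ z, HasDerivAt Φ (Φ' z) z)
    (hΨ : ∀ z, 2 * r * Φ z - 3 * z * Φ' z = Ψ z) (y : Fin 3 → ℝ) :
    HasFDerivAt (selfSimilar r Φ)
      (selfSimilar (r - 3 / 2) Φ' y • (π 0)
        + selfSimilar (r - 1) Ψ y • (y 1 • (π 1) + y 2 • π 2)) y := by
  have hs := bracket_pos y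
  have hS := hasFDerivAt_bracket y
  have hZ : HasFDerivAt scaledCoord _ y :=
    (hS.rpow_const (p := -(3 : ℝ) / 2) (Or.inl hs.ne')).mul (hasFDerivAt_apply (𝕜 := ℝ) 0 y)
  refine ((hS.rpow_const (p := r) (Or.inl hs.ne')).mul
    ((hΦ (scaledCoord y)).comp_hasFDerivAt y hZ)).congr_fderiv ?_
  have e₁ : bracket y ^ r * bracket y ^ (-(3 : ℝ) / 2) = bracket y ^ (r - 3 / 2) := by
    rw [← Real.rpow_add hs]; ring_nf
  have e₂ : bracket y ^ r * (bracket y ^ (-(3 : ℝ) / 2 - 1) * y 0)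
      = bracket y ^ (r - 1) * scaledCoord y := by
    rw [scaledCoord, ← mul_assoc, ← mul_assoc, ← Real.rpow_add hs, ← Real.rpow_add hs]
    ring_nf
  ext v
  simp only [smul_add, Function.comp_apply, add_apply,
    smul_apply, ContinuousLinearMap.proj_apply, smul_eq_mul, selfSimilar, ← hΨ]
  linear_combination (Φ' (scaledCoord y) * v 0) * e₁
    - 3 * Φ' (scaledCoord y) * (y 1 * v 1 + y 2 * v 2) * e₂

theorem partialDeriv_zero_selfSimilar (hΦ : ∀ z, HasDerivAt Φ (Φ' z) z) :
    partialDeriv 0 (selfSimilar r Φ) = selfSimilar (r - 3 / 2) Φ' := by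
  funext y
  rw [partialDeriv, (hasFDerivAt_selfSimilar hΦ (fun _ => rfl) y).fderiv]
  simp

theorem partialDeriv_selfSimilar (hΦ : ∀ z, HasDerivAt Φ (Φ' z) z)
    (hΨ : ∀ z, 2 * r * Φ z - 3 * z * Φ' z = Ψ z) {i : Fin 3} (hi : i ≠ 0) :
    partialDeriv i (selfSimilar r Φ) = fun y => y i * selfSimilar (r - 1) Ψ y := by
  funext y
  rw [partialDeriv, (hasFDerivAt_selfSimilar hΦ hΨ y).fderiv]
  obtain rfl | rfl : i = 1 ∨ i = 2 := by omega
  all_goals simp [mul_comm]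

theorem differentiableAt_selfSimilar (hΦ : ∀ z, HasDerivAt Φ (Φ' z) z) (y : Fin 3 → ℝ) :
    DifferentiableAt ℝ (selfSimilar r Φ) y :=
  (hasFDerivAt_selfSimilar hΦ (fun _ => rfl) y).differentiableAt

end SelfSimilar

theorem sq_scaledCoord_mul_bracket_pow (y : Fin 3 → ℝ) :
    scaledCoord y ^ 2 * bracket y ^ 3 = y 0 ^ 2 := by
  have hs := bracket_pos y
  have h : (bracket y ^ (-(3 : ℝ) / 2)) ^ 2 * bracket y ^ 3 = 1 := by
    rw [← Real.rpow_natCast, ← Real.rpow_natCast (bracket y), ← Real.rpow_mul hs.le,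
      ← Real.rpow_add hs]
    norm_num
  rw [scaledCoord, mul_pow]
  linear_combination y 0 ^ 2 * h

theorem one_le_weight (y : Fin 3 → ℝ) : 1 ≤ weight y := by
  unfold weight
  have := pow_nonneg (add_nonneg (sq_nonneg (y 1)) (sq_nonneg (y 2))) 3
  nlinarith [sq_nonneg (y 0)]

theorem weight_le_bracket_pow_add (y : Fin 3 → ℝ) : weight y ≤ bracket y ^ 3 + y 0 ^ 2 := by
  unfold weight bracket
  nlinarith [sq_nonneg (y 1), sq_nonneg (y 2), mul_nonneg (sq_nonneg (y 1)) (sq_nonneg (y 2))]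

theorem abs_coord_le {i : Fin 3} (hi : i ≠ 0) (y : Fin 3 → ℝ) :
    |y i| ≤ bracket y ^ ((1 : ℝ) / 2) := by
  rw [← Real.sqrt_eq_rpow]
  refine Real.abs_le_sqrt ?_
  unfold bracket
  obtain rfl | rfl : i = 1 ∨ i = 2 := by omega
  · nlinarith [sq_nonneg (y 2)]
  · nlinarith [sq_nonneg (y 1)]

theorem abs_coord_mul_coord_le {i j : Fin 3} (hi : i ≠ 0) (hj : j ≠ 0) (y : Fin 3 → ℝ) :
    |y i * y j| ≤ bracket y ^ (1 : ℝ) := by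
  rw [abs_mul, ← add_halves (1 : ℝ), Real.rpow_add (bracket_pos y)]
  exact mul_le_mul (abs_coord_le hi y) (abs_coord_le hj y) (abs_nonneg _)
    (Real.rpow_nonneg (bracket_pos y).le _)

theorem abs_mul_selfSimilar_le {x k : ℝ} {y : Fin 3 → ℝ} (hx : |x| ≤ bracket y ^ k)
    (r : ℝ) (Φ : ℝ → ℝ) : |x * selfSimilar r Φ y| ≤ |selfSimilar (r + k) Φ y| := by
  have hs := bracket_pos y
  rw [selfSimilar, selfSimilar, abs_mul, abs_mul, abs_mul, abs_of_pos (Real.rpow_pos_of_pos hs _),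
    abs_of_pos (Real.rpow_pos_of_pos hs _)]
  calc _ ≤ bracket y ^ k * (bracket y ^ r * |Φ (scaledCoord y)|) := by gcongr
    _ = _ := by rw [Real.rpow_add hs]; ring

section Profile

variable {U : ℝ → ℝ} (hU : ∀ z, z = -U z - U z ^ 3)
include hU

theorem weight_le_cube (y : Fin 3 → ℝ) :
    weight y ≤ (bracket y * (1 + 3 * U (scaledCoord y) ^ 2)) ^ 3 :=
  calc weight y ≤ bracket y ^ 3 + y 0 ^ 2 := weight_le_bracket_pow_add y
    _ = bracket y ^ 3 * (1 + scaledCoord y ^ 2) := by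
      rw [← sq_scaledCoord_mul_bracket_pow]; ring
    _ ≤ bracket y ^ 3 * (1 + 3 * U (scaledCoord y) ^ 2) ^ 3 := by
      gcongr
      · exact pow_nonneg (bracket_pos y).le 3
      · exact one_add_sq_le_of_cubic_inverse hU _
    _ = _ := (mul_pow ..).symm

theorem abs_selfSimilar_le {Φ : ℝ → ℝ} {c b r e : ℝ}
    (hΦ : ∀ z, |Φ z| ≤ c * (1 + 3 * U z ^ 2) ^ b) (he : e ≤ 0) (hr : r ≤ 3 * e)
    (hb : b ≤ 3 * e) (y : Fin 3 → ℝ) : |selfSimilar r Φ y| ≤ c * weight y ^ e := by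
  set s := bracket y
  set w := 1 + 3 * U (scaledCoord y) ^ 2
  have hs : 1 ≤ s := one_le_bracket y
  have hw : 1 ≤ w := le_add_of_nonneg_right (by positivity)
  have hc : 0 ≤ c :=
    (mul_nonneg_iff_of_pos_right (by positivity)).1 ((abs_nonneg _).trans (hΦ 0))
  calc |selfSimilar r Φ y| = s ^ r * |Φ (scaledCoord y)| := by
        rw [selfSimilar, abs_mul, abs_of_pos (by positivity)]
    _ ≤ s ^ r * (c * w ^ b) := by gcongr; exact hΦ _
    _ ≤ s ^ (3 * e) * (c * w ^ (3 * e)) := by gcongr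
    _ = c * ((s * w) ^ 3) ^ e := by
        rw [← Real.rpow_natCast, ← Real.rpow_mul (by positivity),
          Real.mul_rpow (by positivity) (by positivity)]
        push_cast
        ring
    _ ≤ c * weight y ^ e := mul_le_mul_of_nonneg_left
        (Real.rpow_le_rpow_of_nonpos (by linarith [one_le_weight y]) (weight_le_cube hU y) he) hc

theorem partialDeriv_zero_profile :
    partialDeriv 0 (selfSimilar (1 / 2) U) = selfSimilar (-1) fun z => -(1 + 3 * U z ^ 2)⁻¹ := by
  rw [partialDeriv_zero_selfSimilar (hasDerivAt_of_cubic_inverse hU)]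
  norm_num

theorem partialDeriv_profile {i : Fin 3} (hi : i ≠ 0) :
    partialDeriv i (selfSimilar (1 / 2) U)
      = fun y => y i * selfSimilar (-1 / 2) (fun z => -2 * U z / (1 + 3 * U z ^ 2)) y := by
  rw [partialDeriv_selfSimilar (hasDerivAt_of_cubic_inverse hU) (scaling_combination_profile hU) hi]
  norm_num

theorem partialDeriv_zero_zero_profile :
    partialDeriv 0 (partialDeriv 0 (selfSimilar (1 / 2) U))
      = selfSimilar (-5 / 2) fun z => -6 * U z / (1 + 3 * U z ^ 2) ^ 3 := by
  rw [partialDeriv_zero_profile hU,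
    partialDeriv_zero_selfSimilar (hasDerivAt_neg_inv_one_add_sq_of_cubic_inverse hU)]
  norm_num

theorem partialDeriv_zero_partialDeriv_profile {i : Fin 3} (hi : i ≠ 0) (y : Fin 3 → ℝ) :
    partialDeriv 0 (partialDeriv i (selfSimilar (1 / 2) U)) y
      = y i * selfSimilar (-2) (fun z => (2 - 6 * U z ^ 2) / (1 + 3 * U z ^ 2) ^ 3) y := by
  have hG := hasDerivAt_div_one_add_sq_of_cubic_inverse hU
  rw [partialDeriv_profile hU hi, partialDeriv_coord_mul (differentiableAt_selfSimilar hG y),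
    partialDeriv_zero_selfSimilar hG, Pi.single_eq_of_ne hi]
  norm_num

theorem partialDeriv_partialDeriv_profile {i j : Fin 3} (hi : i ≠ 0) (hj : j ≠ 0)
    (y : Fin 3 → ℝ) :
    partialDeriv j (partialDeriv i (selfSimilar (1 / 2) U)) y
      = (Pi.single j 1 : Fin 3 → ℝ) i
          * selfSimilar (-1 / 2) (fun z => -2 * U z / (1 + 3 * U z ^ 2)) y
        + y i * y j * selfSimilar (-3 / 2) (fun z => 8 * U z / (1 + 3 * U z ^ 2) ^ 3) y := by
  have hG := hasDerivAt_div_one_add_sq_of_cubic_inverse hU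
  rw [partialDeriv_profile hU hi, partialDeriv_coord_mul (differentiableAt_selfSimilar hG y),
    partialDeriv_selfSimilar hG (scaling_combination_transverse hU) hj, mul_assoc]
  norm_num

theorem abs_profile_le (y : Fin 3 → ℝ) :
    |selfSimilar (1 / 2) U y| ≤ weight y ^ ((1 : ℝ) / 6) := by
  have hs := bracket_pos y
  have hs3 : (bracket y ^ ((1 : ℝ) / 2)) ^ 6 = bracket y ^ 3 := by
    rw [← Real.rpow_natCast, ← Real.rpow_mul hs.le]
    norm_num
  have h6 : |selfSimilar (1 / 2) U y| ^ 6 ≤ weight y :=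
    calc |selfSimilar (1 / 2) U y| ^ 6 = bracket y ^ 3 * U (scaledCoord y) ^ 6 := by
          rw [selfSimilar, abs_mul, mul_pow, abs_of_pos (Real.rpow_pos_of_pos hs _), hs3,
            pow_abs, abs_of_nonneg (by positivity)]
      _ ≤ bracket y ^ 3 * scaledCoord y ^ 2 := by
          gcongr
          exact pow_six_le_sq_of_cubic_inverse hU _
      _ = y 0 ^ 2 := by rw [mul_comm, sq_scaledCoord_mul_bracket_pow]
      _ ≤ weight y := by
          unfold weight
          nlinarith [pow_nonneg (add_nonneg (sq_nonneg (y 1)) (sq_nonneg (y 2))) 3]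
  calc |selfSimilar (1 / 2) U y| = (|selfSimilar (1 / 2) U y| ^ 6) ^ ((1 : ℝ) / 6) := by
        rw [← Real.rpow_natCast, ← Real.rpow_mul (abs_nonneg _)]
        norm_num
    _ ≤ weight y ^ ((1 : ℝ) / 6) := by gcongr

theorem abs_partialDeriv_zero_profile_le (y : Fin 3 → ℝ) :
    |partialDeriv 0 (selfSimilar (1 / 2) U) y| ≤ weight y ^ (-(1 : ℝ) / 3) := by
  rw [partialDeriv_zero_profile hU, ← one_mul (weight y ^ _)]
  exact abs_selfSimilar_le hU (fun z => abs_neg_inv_one_add_sq (U z)) (by norm_num) (by norm_num)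
    (by norm_num) y

theorem abs_partialDeriv_profile_le {i : Fin 3} (hi : i ≠ 0) (y : Fin 3 → ℝ) :
    |partialDeriv i (selfSimilar (1 / 2) U) y| ≤ 2 := by
  rw [partialDeriv_profile hU hi]
  refine (abs_mul_selfSimilar_le (abs_coord_le hi y) _ _).trans ?_
  refine (abs_selfSimilar_le hU (fun z => abs_mul_div_one_add_sq_le (-2) (U z)) (e := 0)
    le_rfl (by norm_num) (by norm_num) y).trans_eq ?_
  norm_num

theorem abs_partialDeriv_zero_zero_profile_le (y : Fin 3 → ℝ) :
    |partialDeriv 0 (partialDeriv 0 (selfSimilar (1 / 2) U)) y|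
      ≤ 6 * weight y ^ (-(1 : ℝ) / 2) := by
  rw [partialDeriv_zero_zero_profile hU]
  refine (abs_selfSimilar_le hU (fun z => abs_mul_div_one_add_sq_pow_three_le (-6) (U z))
    (e := -(1 : ℝ) / 2) (by norm_num) (by norm_num) (by norm_num) y).trans_eq ?_
  norm_num

theorem abs_partialDeriv_zero_partialDeriv_profile_le {i : Fin 3} (hi : i ≠ 0)
    (y : Fin 3 → ℝ) :
    |partialDeriv 0 (partialDeriv i (selfSimilar (1 / 2) U)) y|
      ≤ 2 * weight y ^ (-(1 : ℝ) / 3) := by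
  rw [partialDeriv_zero_partialDeriv_profile hU hi]
  exact (abs_mul_selfSimilar_le (abs_coord_le hi y) _ _).trans
    (abs_selfSimilar_le hU (fun z => abs_two_sub_div_one_add_sq_pow_three_le (U z))
      (by norm_num) (by norm_num) (by norm_num) y)

theorem abs_partialDeriv_partialDeriv_profile_le {i j : Fin 3} (hi : i ≠ 0) (hj : j ≠ 0)
    (y : Fin 3 → ℝ) :
    |partialDeriv j (partialDeriv i (selfSimilar (1 / 2) U)) y|
      ≤ 10 * weight y ^ (-(1 : ℝ) / 6) := by
  rw [partialDeriv_partialDeriv_profile hU hi hj]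
  have h₁ := (abs_mul_selfSimilar_le
    ((abs_single_one_apply_le i j).trans_eq (Real.rpow_zero _).symm) (-1 / 2) _).trans
    (abs_selfSimilar_le hU (fun z => abs_mul_div_one_add_sq_le (-2) (U z)) (e := -(1 : ℝ) / 6)
      (by norm_num) (by norm_num) (by norm_num) y)
  have h₂ := (abs_mul_selfSimilar_le (abs_coord_mul_coord_le hi hj y) (-3 / 2) _).trans
    (abs_selfSimilar_le hU (fun z => abs_mul_div_one_add_sq_pow_three_le 8 (U z))
      (e := -(1 : ℝ) / 6) (by norm_num) (by norm_num) (by norm_num) y)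
  calc _ ≤ _ + _ := abs_add_le _ _
    _ ≤ 2 * weight y ^ (-(1 : ℝ) / 6) + 8 * weight y ^ (-(1 : ℝ) / 6) :=
      add_le_add (h₁.trans_eq (by norm_num)) (h₂.trans_eq (by norm_num))
    _ = _ := by ring

end Profile

end BurgersProfile

open BurgersProfile in
/-- Weighted bounds for the 3D self-similar Burgers profile `W̄` and its first and
second partial derivatives, with weight `η(y) = 1 + y₁² + (y₂² + y₃²)³`. -/
theorem selfsimilar_burgers_profile_3d_bounds
    (Ubar : ℝ → ℝ) (hUbar : ∀ z : ℝ, z = -Ubar z - Ubar z ^ 3)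
    (Wbar : (Fin 3 → ℝ) → ℝ)
    (hWbar : ∀ y : Fin 3 → ℝ,
      Wbar y = (1 + y 1 ^ 2 + y 2 ^ 2) ^ ((1 : ℝ) / 2)
        * Ubar ((1 + y 1 ^ 2 + y 2 ^ 2) ^ (-(3 : ℝ) / 2) * y 0))
    (η : (Fin 3 → ℝ) → ℝ)
    (hη : ∀ y : Fin 3 → ℝ, η y = 1 + y 0 ^ 2 + (y 1 ^ 2 + y 2 ^ 2) ^ 3)
    (pd : Fin 3 → ((Fin 3 → ℝ) → ℝ) → (Fin 3 → ℝ) → ℝ)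
    (hpd : ∀ (i : Fin 3) (f : (Fin 3 → ℝ) → ℝ) (y : Fin 3 → ℝ),
      pd i f y = fderiv ℝ f y (Pi.single i 1)) :
    ∃ C : ℝ, 0 < C ∧ ∀ y : Fin 3 → ℝ,
      |Wbar y| ≤ C * η y ^ ((1 : ℝ) / 6) ∧
      |pd 0 Wbar y| ≤ C * η y ^ (-(1 : ℝ) / 3) ∧
      (∀ i : Fin 3, i ≠ 0 → |pd i Wbar y| ≤ C) ∧
      |pd 0 (pd 0 Wbar) y| ≤ C * η y ^ (-(1 : ℝ) / 2) ∧
      (∀ i : Fin 3, i ≠ 0 → |pd 0 (pd i Wbar) y| ≤ C * η y ^ (-(1 : ℝ) / 3)) ∧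
      (∀ i j : Fin 3, i ≠ 0 → j ≠ 0 →
        |pd i (pd j Wbar) y| ≤ C * η y ^ (-(1 : ℝ) / 6)) := by
  obtain rfl : pd = partialDeriv := by funext i f y; exact hpd i f y
  obtain rfl : Wbar = selfSimilar (1 / 2) Ubar := funext hWbar
  obtain rfl : η = weight := funext hη
  refine ⟨10, by norm_num, fun y => ?_⟩
  have hw (e : ℝ) : 0 ≤ weight y ^ e := Real.rpow_nonneg (by linarith [one_le_weight y]) e
  refine ⟨?_, ?_, fun i hi => ?_, ?_, fun i hi => ?_, fun i j hi hj => ?_⟩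
  · linarith [abs_profile_le hUbar y, hw (1 / 6)]
  · linarith [abs_partialDeriv_zero_profile_le hUbar y, hw (-1 / 3)]
  · linarith [abs_partialDeriv_profile_le hUbar hi y]
  · linarith [abs_partialDeriv_zero_zero_profile_le hUbar y, hw (-1 / 2)]
  · linarith [abs_partialDeriv_zero_partialDeriv_profile_le hUbar hi y, hw (-1 / 3)]
  · exact abs_partialDeriv_partialDeriv_profile_le hUbar hj hi y
end

section
/- Let a < 1 with a ≠ 0, let T ∈ (-1, ∞], and let u : ℝ × [-1, T) → ℝ be a C² solution of the damped Burgers equation ∂ₜu + u ∂ₓu = -au with u(0, -1) = 0 and ∂ₓu(0, -1) = -1. Then u(0, t) = 0 and ∂ₓu(0, t) = a e^{-a(t+1)} / ((1 - a) - e^{-a(t+1)}) for all t ∈ [-1, T); consequently T ≤ T★ := -(1/a) ln(1 - a) - 1, and if T = T★ then ∂ₓu(0, t) → -∞ as t → T★⁻. Thus when a < 1 the damping cannot prevent shock formation, and the blow-up time is T★ (which is > 0 for 0 < a < 1, delayed relative to the undamped case, and < 0 for a < 0, advanced), while the blow-up location remains x★ = 0. -/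
open Set Filter Topology

/-!
On the line `x = 0` the equation reads `∂ₜu = -(a + ∂ₓu) u`, a linear ODE with zero initial
value, so `u(0, t) = 0` by Gronwall. Differentiating the equation in `x` (the C² hypothesis makes
the mixed partials commute) then shows that the slope `V(t) = ∂ₓu(0, t)` solves the Riccati
equation `V' = -a V - V²` with `V(-1) = -1`. The difference of two solutions of this equation solves
a linear ODE, so `V` is the explicit solution, which tends to `-∞` as `t → T★⁻`; as `V` is
continuous on `[-1, T)`, this forces `T ≤ T★`.
-/

theorem eqOn_zero_of_hasDerivWithinAt_mul {c y : ℝ → ℝ} {a b : ℝ} (hc : ContinuousOn c (Icc a b))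
    (hy : ∀ t ∈ Icc a b, HasDerivWithinAt y (c t * y t) (Icc a b) t) (ha : y a = 0) :
    EqOn y 0 (Icc a b) := by
  obtain ⟨K, hK⟩ := isCompact_Icc.exists_bound_of_continuousOn hc
  intro t ht
  have h := norm_le_gronwallBound_of_norm_deriv_right_le (δ := 0) (ε := 0) (K := K)
    (fun s hs => (hy s hs).continuousWithinAt)
    (fun s hs => (hy s (Ico_subset_Icc_self hs)).mono_of_mem_nhdsWithin (Icc_mem_nhdsGE_of_mem hs))
    (by simp [ha]) (fun s hs => ?_) t ht
  · simpa [gronwallBound_ε0_δ0] using h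
  · rw [norm_mul, add_zero]
    exact mul_le_mul_of_nonneg_right (hK s (Ico_subset_Icc_self hs)) (norm_nonneg _)

theorem eqOn_of_hasDerivWithinAt_riccati {k a b : ℝ} {f g : ℝ → ℝ}
    (hf : ∀ t ∈ Icc a b, HasDerivWithinAt f (-k * f t - f t ^ 2) (Icc a b) t)
    (hg : ∀ t ∈ Icc a b, HasDerivWithinAt g (-k * g t - g t ^ 2) (Icc a b) t) (ha : f a = g a) :
    EqOn f g (Icc a b) := by
  have hcont : ContinuousOn (fun t => -(k + f t + g t)) (Icc a b) :=
    ((continuousOn_const.add fun t ht => (hf t ht).continuousWithinAt).add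
      fun t ht => (hg t ht).continuousWithinAt).neg
  have hdiff := eqOn_zero_of_hasDerivWithinAt_mul hcont
    (fun t ht => ((hf t ht).sub (hg t ht)).congr_deriv (by simp only [Pi.sub_apply]; ring))
    (sub_eq_zero.2 ha)
  exact fun t ht => sub_eq_zero.1 (hdiff ht)

noncomputable def shockTime (a : ℝ) : ℝ := -(1 / a) * Real.log (1 - a) - 1

noncomputable def shockSlope (a t : ℝ) : ℝ :=
  a * Real.exp (-a * (t + 1)) / ((1 - a) - Real.exp (-a * (t + 1)))

section ShockSlope

variable {a : ℝ}

theorem shockTime_eq (ha0 : a ≠ 0) : shockTime a = (-Real.log (1 - a) - a) / a := by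
  unfold shockTime; field_simp

theorem log_one_sub_lt_neg (ha0 : a ≠ 0) (ha1 : a < 1) : Real.log (1 - a) < -a := by
  linarith [Real.log_lt_sub_one_of_pos (by linarith : 0 < 1 - a) (by contrapose! ha0; linarith)]

theorem shockTime_pos (ha1 : a < 1) (ha : 0 < a) : 0 < shockTime a := by
  rw [shockTime_eq ha.ne']
  exact div_pos (by linarith [log_one_sub_lt_neg ha.ne' ha1]) ha

theorem shockTime_neg (ha : a < 0) : shockTime a < 0 := by
  rw [shockTime_eq ha.ne]
  exact div_neg_of_pos_of_neg (by linarith [log_one_sub_lt_neg ha.ne (by linarith)]) ha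

theorem neg_one_lt_shockTime (ha0 : a ≠ 0) (ha1 : a < 1) : -1 < shockTime a := by
  rcases ha0.lt_or_gt with ha | ha
  · have : 0 < -(1 / a) * Real.log (1 - a) :=
      mul_pos (by simpa using ha) (Real.log_pos (by linarith))
    unfold shockTime; linarith
  · linarith [shockTime_pos ha1 ha]

theorem exp_shockTime (ha0 : a ≠ 0) (ha1 : a < 1) :
    Real.exp (-a * (shockTime a + 1)) = 1 - a := by
  have : -a * (shockTime a + 1) = Real.log (1 - a) := by unfold shockTime; field_simp; ring
  rw [this, Real.exp_log (by linarith)]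

theorem mul_sub_exp_neg_of_lt_shockTime (ha0 : a ≠ 0) (ha1 : a < 1) {t : ℝ}
    (ht : t < shockTime a) : a * ((1 - a) - Real.exp (-a * (t + 1))) < 0 := by
  rw [← exp_shockTime ha0 ha1]
  rcases ha0.lt_or_gt with ha | ha
  · refine mul_neg_of_neg_of_pos ha (sub_pos.2 (Real.exp_lt_exp.2 ?_))
    nlinarith
  · refine mul_neg_of_pos_of_neg ha (sub_neg.2 (Real.exp_lt_exp.2 ?_))
    nlinarith

theorem shockSlope_neg_one (ha0 : a ≠ 0) : shockSlope a (-1) = -1 := by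
  simp [shockSlope, ha0]

theorem hasDerivAt_shockSlope (ha0 : a ≠ 0) (ha1 : a < 1) {t : ℝ} (ht : t < shockTime a) :
    HasDerivAt (shockSlope a) (-a * shockSlope a t - shockSlope a t ^ 2) t := by
  have hd : (1 - a) - Real.exp (-a * (t + 1)) ≠ 0 :=
    (mul_ne_zero_iff.1 (mul_sub_exp_neg_of_lt_shockTime ha0 ha1 ht).ne).2
  have he : HasDerivAt (fun s => Real.exp (-a * (s + 1))) (Real.exp (-a * (t + 1)) * -a) t := by
    simpa using (((hasDerivAt_id t).add_const 1).const_mul (-a)).exp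
  refine ((he.const_mul a).div (he.const_sub (1 - a)) hd).congr_deriv ?_
  unfold shockSlope
  field_simp

theorem tendsto_shockSlope_atBot (ha0 : a ≠ 0) (ha1 : a < 1) :
    Tendsto (shockSlope a) (𝓝[<] shockTime a) atBot := by
  set d : ℝ → ℝ := fun t => a * ((1 - a) - Real.exp (-a * (t + 1)))
  have hd : Tendsto d (𝓝[<] shockTime a) (𝓝[<] 0) := by
    refine tendsto_nhdsWithin_iff.2 ⟨?_, ?_⟩
    · have : d (shockTime a) = 0 := by simp only [d, exp_shockTime ha0 ha1, sub_self, mul_zero]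
      exact this ▸ ((by fun_prop : Continuous d).tendsto _).mono_left nhdsWithin_le_nhds
    · filter_upwards [self_mem_nhdsWithin] with t ht
      exact mul_sub_exp_neg_of_lt_shockTime ha0 ha1 ht
  have hnum : Tendsto (fun t => a ^ 2 * Real.exp (-a * (t + 1))) (𝓝[<] shockTime a)
      (𝓝 (a ^ 2 * (1 - a))) := by
    rw [← exp_shockTime ha0 ha1]
    exact ((by fun_prop : Continuous _).tendsto _).mono_left nhdsWithin_le_nhds
  refine ((hnum.pos_mul_atBot (by have := sq_pos_of_ne_zero ha0; nlinarith)
    (tendsto_inv_nhdsLT_zero.comp hd))).congr fun t => ?_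
  simp only [Function.comp_apply, d, shockSlope, mul_inv]
  field_simp

theorem eqOn_shockSlope_of_riccati (ha0 : a ≠ 0) (ha1 : a < 1) {I : Set ℝ} {V : ℝ → ℝ} {t : ℝ}
    (ht : t < shockTime a) (hsub : Icc (-1) t ⊆ I)
    (hV : ∀ s ∈ I, HasDerivWithinAt V (-a * V s - V s ^ 2) I s) (hV1 : V (-1) = -1) :
    EqOn V (shockSlope a) (Icc (-1) t) :=
  eqOn_of_hasDerivWithinAt_riccati (fun s hs => (hV s (hsub hs)).mono hsub)
    (fun _ hs => (hasDerivAt_shockSlope ha0 ha1 (hs.2.trans_lt ht)).hasDerivWithinAt)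
    (hV1.trans (shockSlope_neg_one ha0).symm)

theorem tendsto_atBot_of_riccati (ha0 : a ≠ 0) (ha1 : a < 1) {I : Set ℝ} {V : ℝ → ℝ}
    (hsub : Ico (-1) (shockTime a) ⊆ I)
    (hV : ∀ s ∈ I, HasDerivWithinAt V (-a * V s - V s ^ 2) I s) (hV1 : V (-1) = -1) :
    Tendsto V (𝓝[<] shockTime a) atBot :=
  (tendsto_shockSlope_atBot ha0 ha1).congr' <|
    eventually_of_mem (Ico_mem_nhdsLT (neg_one_lt_shockTime ha0 ha1)) fun _ ht =>
      (eqOn_shockSlope_of_riccati ha0 ha1 ht.2 ((Icc_subset_Ico_right ht.2).trans hsub) hV hV1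
        ⟨ht.1, le_rfl⟩).symm

theorem shockTime_notMem_of_riccati (ha0 : a ≠ 0) (ha1 : a < 1) {I : Set ℝ} {V : ℝ → ℝ}
    (hI : Convex ℝ I) (h1I : (-1 : ℝ) ∈ I)
    (hV : ∀ s ∈ I, HasDerivWithinAt V (-a * V s - V s ^ 2) I s) (hV1 : V (-1) = -1) :
    shockTime a ∉ I := by
  intro hmem
  have hsub : Ico (-1) (shockTime a) ⊆ I :=
    Ico_subset_Icc_self.trans (hI.ordConnected.out h1I hmem)
  have hcont : Tendsto V (𝓝[<] shockTime a) (𝓝 (V (shockTime a))) := by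
    rw [← nhdsWithin_Ico_eq_nhdsLT (neg_one_lt_shockTime ha0 ha1)]
    exact (hV _ hmem).continuousWithinAt.mono hsub
  exact not_tendsto_atBot_of_tendsto_nhds hcont (tendsto_atBot_of_riccati ha0 ha1 hsub hV hV1)

end ShockSlope

section Slab

variable {E : Type*} [NormedAddCommGroup E] [NormedSpace ℝ E] {I : Set ℝ} {F : ℝ × ℝ → E}
  {x t : ℝ}

theorem hasDerivAt_slice_fst (hF : DifferentiableWithinAt ℝ F (univ ×ˢ I) (x, t)) (ht : t ∈ I) :
    HasDerivAt (fun x' => F (x', t)) (fderivWithin ℝ F (univ ×ˢ I) (x, t) (1, 0)) x := by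
  have := hF.hasFDerivWithinAt.comp_hasDerivWithinAt x
    (((hasDerivAt_id x).prodMk (hasDerivAt_const x t)).hasDerivWithinAt (s := univ))
    fun _ _ => (⟨trivial, ht⟩ : _ ∈ univ ×ˢ I)
  exact hasDerivWithinAt_univ.1 this

theorem hasDerivWithinAt_slice_snd (hF : DifferentiableWithinAt ℝ F (univ ×ˢ I) (x, t)) :
    HasDerivWithinAt (fun t' => F (x, t')) (fderivWithin ℝ F (univ ×ˢ I) (x, t) (0, 1)) I t :=
  hF.hasFDerivWithinAt.comp_hasDerivWithinAt t
    ((hasDerivAt_const t x).prodMk (hasDerivAt_id t)).hasDerivWithinAt fun _ hs => ⟨trivial, hs⟩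

theorem uniqueDiffOn_univ_prod (hI : Convex ℝ I) (hI' : (interior I).Nonempty) :
    UniqueDiffOn ℝ ((univ : Set ℝ) ×ˢ I) :=
  uniqueDiffOn_univ.prod (uniqueDiffOn_convex hI hI')

theorem subset_closure_interior_univ_prod (hI : Convex ℝ I) (hI' : (interior I).Nonempty) :
    (univ : Set ℝ) ×ˢ I ⊆ closure (interior ((univ : Set ℝ) ×ˢ I)) := by
  rw [(convex_univ.prod hI).closure_interior_eq_closure_of_nonempty_interior
    (by simpa [interior_prod_eq] using hI')]
  exact subset_closure

theorem differentiableOn_fderivWithin_univ_prod (hI : Convex ℝ I) (hI' : (interior I).Nonempty)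
    (hF : ContDiffOn ℝ 2 F (univ ×ˢ I)) :
    DifferentiableOn ℝ (fderivWithin ℝ F (univ ×ˢ I)) (univ ×ˢ I) :=
  (hF.fderivWithin (uniqueDiffOn_univ_prod hI hI') (m := 1) (by norm_num)).differentiableOn
    one_ne_zero

/-- Symmetry of mixed partials, `∂ₜ ∂ₓ F = ∂ₓ ∂ₜ F`, on the slab `univ ×ˢ I`. -/
theorem hasDerivWithinAt_fderivWithin_slice (hI : Convex ℝ I) (hI' : (interior I).Nonempty)
    (hF : ContDiffOn ℝ 2 F (univ ×ˢ I)) (ht : t ∈ I) :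
    HasDerivWithinAt (fun t' => fderivWithin ℝ F (univ ×ˢ I) (x, t') (1, 0))
      (deriv (fun x' => fderivWithin ℝ F (univ ×ˢ I) (x', t) (0, 1)) x) I t := by
  have hS := uniqueDiffOn_univ_prod hI hI'
  have hp : (x, t) ∈ univ ×ˢ I := ⟨trivial, ht⟩
  have hDF := differentiableOn_fderivWithin_univ_prod hI hI' hF _ hp
  have hsymm := (hF _ hp).isSymmSndFDerivWithinAt (by simp) hS
    (subset_closure_interior_univ_prod hI hI' hp) hp
  rw [(((hasDerivAt_slice_fst hDF ht).clm_apply (hasDerivAt_const x (0, 1))).deriv)]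
  simpa [hsymm (0, 1) (1, 0)] using
    (hasDerivWithinAt_slice_snd hDF).clm_apply (hasDerivWithinAt_const t I (1, 0))

end Slab

def SolvesDampedBurgers (a : ℝ) (I : Set ℝ) (u : ℝ → ℝ → ℝ) : Prop :=
  ∀ x, ∀ t ∈ I, HasDerivWithinAt (u x ·) (-a * u x t - u x t * deriv (u · t) x) I t

section DampedBurgers

variable {a : ℝ} {I : Set ℝ} {u : ℝ → ℝ → ℝ}

theorem hasDerivWithinAt_deriv_of_damped_burgers (hI : Convex ℝ I) (hI' : (interior I).Nonempty)
    (hu : ContDiffOn ℝ 2 (fun p : ℝ × ℝ => u p.1 p.2) (univ ×ˢ I))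
    (hpde : SolvesDampedBurgers a I u)
    (x : ℝ) {t : ℝ} (ht : t ∈ I) :
    HasDerivWithinAt (fun t' => deriv (u · t') x)
      (-a * deriv (u · t) x - deriv (u · t) x ^ 2 - u x t * deriv (deriv (u · t)) x) I t := by
  set F : ℝ × ℝ → ℝ := fun p => u p.1 p.2
  have hdiff : ∀ x', ∀ t' ∈ I, DifferentiableWithinAt ℝ F (univ ×ˢ I) (x', t') :=
    fun x' t' ht' => hu.differentiableOn (by norm_num) _ ⟨trivial, ht'⟩
  have hux : ∀ t' ∈ I, deriv (u · t') = fun x' => fderivWithin ℝ F (univ ×ˢ I) (x', t') (1, 0) :=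
    fun t' ht' => funext fun x' => (hasDerivAt_slice_fst (hdiff x' t' ht') ht').deriv
  have hut : (fun x' => fderivWithin ℝ F (univ ×ˢ I) (x', t) (0, 1))
      = fun x' => -a * u x' t - u x' t * deriv (u · t) x' := by
    funext x'
    have hI_t := uniqueDiffOn_convex hI hI' t ht
    rw [← (hasDerivWithinAt_slice_snd (hdiff x' t ht)).derivWithin hI_t,
      (hpde x' t ht).derivWithin hI_t]
  have hu_x : HasDerivAt (u · t) (deriv (u · t) x) x :=
    (hasDerivAt_slice_fst (hdiff x t ht) ht).differentiableAt.hasDerivAt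
  have hux_x : HasDerivAt (deriv (u · t)) (deriv (deriv (u · t)) x) x := by
    rw [hux t ht]
    exact (((hasDerivAt_slice_fst (differentiableOn_fderivWithin_univ_prod hI hI' hu _
      ⟨trivial, ht⟩) ht).clm_apply (hasDerivAt_const x (1, 0))).differentiableAt).hasDerivAt
  have hrhs : HasDerivAt (fun x' => -a * u x' t - u x' t * deriv (u · t) x')
      (-a * deriv (u · t) x - (deriv (u · t) x * deriv (u · t) x
        + u x t * deriv (deriv (u · t)) x)) x :=
    (hu_x.const_mul (-a)).sub (hu_x.mul hux_x)
  have hmixed := hasDerivWithinAt_fderivWithin_slice (x := x) hI hI' hu ht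
  rw [hut, hrhs.deriv] at hmixed
  exact (hmixed.congr_of_mem (fun t' ht' => congr_fun (hux t' ht') x) ht).congr_deriv (by ring)

theorem eq_zero_of_damped_burgers (hI : Convex ℝ I) (hI' : (interior I).Nonempty)
    (hu : ContDiffOn ℝ 2 (fun p : ℝ × ℝ => u p.1 p.2) (univ ×ˢ I))
    (hpde : SolvesDampedBurgers a I u)
    {x t₀ t : ℝ} (ht₀ : t₀ ∈ I) (ht : t ∈ I) (hle : t₀ ≤ t) (h0 : u x t₀ = 0) : u x t = 0 := by
  have hsub : Icc t₀ t ⊆ I := hI.ordConnected.out ht₀ ht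
  have hc : ContinuousOn (fun s => -(a + deriv (u · s) x)) (Icc t₀ t) := fun s hs =>
    ((hasDerivWithinAt_deriv_of_damped_burgers hI hI' hu hpde x (hsub hs)).continuousWithinAt.mono
      hsub).const_add a |>.neg
  exact eqOn_zero_of_hasDerivWithinAt_mul hc
    (fun s hs => ((hpde x s (hsub hs)).mono hsub).congr_deriv (by ring)) h0 ⟨hle, le_rfl⟩

end DampedBurgers

theorem convex_setOf_le_and_coe_lt (t₀ : ℝ) (T : EReal) :
    Convex ℝ {t : ℝ | t₀ ≤ t ∧ (t : EReal) < T} :=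
  OrdConnected.convex
    ⟨fun _ hx _ hy _ hz => ⟨hx.1.trans hz.1, (EReal.coe_le_coe_iff.2 hz.2).trans_lt hy.2⟩⟩

theorem interior_setOf_le_and_coe_lt_nonempty {t₀ : ℝ} {T : EReal} (h : (t₀ : EReal) < T) :
    (interior {t : ℝ | t₀ ≤ t ∧ (t : EReal) < T}).Nonempty := by
  obtain ⟨r, ht₀r, hrT⟩ := EReal.lt_iff_exists_real_btwn.1 h
  have hr : t₀ < r := EReal.coe_lt_coe_iff.1 ht₀r
  refine ⟨(t₀ + r) / 2, interior_maximal (t := Ioo t₀ r) ?_ isOpen_Ioo ⟨by linarith, by linarith⟩⟩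
  exact fun s hs => ⟨hs.1.le, (EReal.coe_lt_coe_iff.2 hs.2).trans hrT⟩

/-- Shifted shock formation for the damped Burgers equation with `a < 1`, `a ≠ 0`:
for a C² solution with `u(0,-1) = 0`, `∂ₓu(0,-1) = -1`, one has `u(0,t) = 0`,
`∂ₓu(0,t) = a e^{-a(t+1)}/((1-a) - e^{-a(t+1)})`, `T ≤ T★ = -(1/a)ln(1-a) - 1`
(with `T★ > 0` for `0 < a < 1` and `T★ < 0` for `a < 0`), and if `T = T★` then
`∂ₓu(0,t) → -∞` as `t → T★⁻`; the blow-up location remains `x★ = 0`. -/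
theorem damped_burgers_shifted_shock
    (a : ℝ) (ha0 : a ≠ 0) (ha1 : a < 1)
    (T : EReal) (hT : (-1 : EReal) < T)
    (u : ℝ → ℝ → ℝ)
    (hreg : ContDiffOn ℝ 2 (fun p : ℝ × ℝ => u p.1 p.2)
      {p : ℝ × ℝ | -1 ≤ p.2 ∧ (p.2 : EReal) < T})
    (heq : ∀ x t : ℝ, -1 ≤ t → (t : EReal) < T →
      ∃ ut : ℝ, HasDerivWithinAt (fun t' => u x t') ut (Ici (-1 : ℝ)) t ∧
        ut + u x t * deriv (fun x' => u x' t) x = -a * u x t)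
    (h0 : u 0 (-1) = 0)
    (h1 : deriv (fun x' => u x' (-1)) 0 = -1) :
    (∀ t : ℝ, -1 ≤ t → (t : EReal) < T →
      u 0 t = 0 ∧
      deriv (fun x' => u x' t) 0
        = a * Real.exp (-a * (t + 1)) / ((1 - a) - Real.exp (-a * (t + 1)))) ∧
    T ≤ ((-(1 / a) * Real.log (1 - a) - 1 : ℝ) : EReal) ∧
    (0 < a → 0 < -(1 / a) * Real.log (1 - a) - 1) ∧
    (a < 0 → -(1 / a) * Real.log (1 - a) - 1 < 0) ∧
    (T = ((-(1 / a) * Real.log (1 - a) - 1 : ℝ) : EReal) →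
      Tendsto (fun t : ℝ => deriv (fun x' => u x' t) 0)
        (nhdsWithin (-(1 / a) * Real.log (1 - a) - 1)
          (Iio (-(1 / a) * Real.log (1 - a) - 1))) atBot) := by
  set I : Set ℝ := {t | -1 ≤ t ∧ (t : EReal) < T}
  have hI : Convex ℝ I := convex_setOf_le_and_coe_lt (-1) T
  have hT' : ((-1 : ℝ) : EReal) < T := by rwa [EReal.coe_neg, EReal.coe_one]
  have hI' : (interior I).Nonempty := interior_setOf_le_and_coe_lt_nonempty hT'
  have h1I : (-1 : ℝ) ∈ I := ⟨le_rfl, hT'⟩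
  have hu : ContDiffOn ℝ 2 (fun p : ℝ × ℝ => u p.1 p.2) (univ ×ˢ I) := by rwa [univ_prod]
  have hpde : SolvesDampedBurgers a I u := fun x t ht => by
    obtain ⟨ut, hut, hequ⟩ := heq x t ht.1 ht.2
    exact (hut.mono fun s hs => hs.1).congr_deriv (by linarith)
  have hzero : ∀ t ∈ I, u 0 t = 0 := fun t ht =>
    eq_zero_of_damped_burgers hI hI' hu hpde h1I ht ht.1 h0
  set V : ℝ → ℝ := fun t => deriv (u · t) 0
  have hV : ∀ t ∈ I, HasDerivWithinAt V (-a * V t - V t ^ 2) I t := fun t ht => by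
    simpa [hzero t ht] using hasDerivWithinAt_deriv_of_damped_burgers hI hI' hu hpde 0 ht
  have hTle : T ≤ shockTime a := by
    by_contra! hlt
    exact shockTime_notMem_of_riccati ha0 ha1 hI h1I hV h1
      ⟨(neg_one_lt_shockTime ha0 ha1).le, hlt⟩
  refine ⟨fun t ht htT => ⟨hzero t ⟨ht, htT⟩, ?_⟩, hTle, shockTime_pos ha1, shockTime_neg,
    fun hTeq => ?_⟩
  · exact eqOn_shockSlope_of_riccati ha0 ha1 (EReal.coe_lt_coe_iff.1 (htT.trans_le hTle))
      (hI.ordConnected.out h1I ⟨ht, htT⟩) hV h1 ⟨ht, le_rfl⟩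
  · refine tendsto_atBot_of_riccati (I := I) ha0 ha1 (fun t ht => ⟨ht.1, ?_⟩) hV h1
    exact hTeq ▸ EReal.coe_lt_coe_iff.2 ht.2
end

section
/- Let a ≥ 1 and define w : [-1, ∞) → ℝ by w(t) = a e^{-a(t+1)} / ((1 - a) - e^{-a(t+1)}). Then the denominator (1 - a) - e^{-a(t+1)} never vanishes for t ≥ -1, w is C¹ and satisfies the Riccati equation w'(t) = -w(t)² - a w(t) with w(-1) = -1, and -1 ≤ w(t) < 0 for all t ≥ -1 (for a = 1, w ≡ -1; for a > 1, w(t) → 0 as t → ∞). Hence for a ≥ 1 the slope of the damped Burgers solution along the critical characteristic never blows up. -/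
/-!
With `E(t) = e^{-a(t+1)}`, which decays with `E' = -aE`, every quotient `aE/(c - E)` solves
`w' = -w² - aw` where its denominator is nonzero; `c = 1 - a` is the member with `w(-1) = -1`.
For `a ≥ 1` this denominator is at most `-E < 0`, so `w` is smooth on all of `ℝ`; on `t ≥ -1`
we have `E ≤ 1`, which gives `-1 ≤ w < 0`, and `E → 0` gives `w → 0` when `a > 1`.
-/

open Set Filter Topology

namespace DampedBurgers

/-- Together with the equilibrium `w ≡ 0`, these are all solutions of `w' = -w² - aw`. -/
noncomputable def riccatiSolution (a c t : ℝ) : ℝ :=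
  a * Real.exp (-a * (t + 1)) / (c - Real.exp (-a * (t + 1)))

variable {a c : ℝ}

lemma hasDerivAt_exp_neg_mul_add_one (a t : ℝ) :
    HasDerivAt (fun t => Real.exp (-a * (t + 1))) (-a * Real.exp (-a * (t + 1))) t := by
  have h : HasDerivAt (fun t : ℝ => -a * (t + 1)) (-a) t := by
    simpa using ((hasDerivAt_id t).add_const 1).const_mul (-a)
  simpa [mul_comm] using h.exp

lemma tendsto_exp_neg_mul_add_one_atTop (ha : 0 < a) :
    Tendsto (fun t => Real.exp (-a * (t + 1))) atTop (𝓝 0) :=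
  Real.tendsto_exp_atBot.comp <|
    (tendsto_atTop_add_const_right _ 1 tendsto_id).const_mul_atTop_of_neg (neg_lt_zero.2 ha)

lemma sub_exp_neg (hc : c ≤ 0) (t : ℝ) : c - Real.exp (-a * (t + 1)) < 0 := by
  linarith [Real.exp_pos (-a * (t + 1))]

lemma hasDerivAt_riccatiSolution {t : ℝ} (ht : c - Real.exp (-a * (t + 1)) ≠ 0) :
    HasDerivAt (riccatiSolution a c)
      (-riccatiSolution a c t ^ 2 - a * riccatiSolution a c t) t := by
  have hE := hasDerivAt_exp_neg_mul_add_one a t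
  refine ((hE.const_mul a).fun_div ((hasDerivAt_const t c).fun_sub hE) ht).congr_deriv ?_
  unfold riccatiSolution
  field_simp
  ring

lemma contDiff_riccatiSolution {n : WithTop ℕ∞} (h : ∀ t, c - Real.exp (-a * (t + 1)) ≠ 0) :
    ContDiff ℝ n (riccatiSolution a c) :=
  ContDiff.div (by fun_prop) (by fun_prop) h

lemma riccatiSolution_one_sub_neg_one (ha : a ≠ 0) : riccatiSolution a (1 - a) (-1) = -1 := by
  simp [riccatiSolution, ha]

lemma riccatiSolution_zero (a t : ℝ) : riccatiSolution a 0 t = -a := by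
  simp [riccatiSolution, div_neg, (Real.exp_pos _).ne']

lemma riccatiSolution_neg (ha : 0 < a) (hc : c ≤ 0) (t : ℝ) : riccatiSolution a c t < 0 :=
  div_neg_of_pos_of_neg (by positivity) (sub_exp_neg hc t)

lemma neg_one_le_riccatiSolution_one_sub (ha : 1 ≤ a) {t : ℝ} (ht : -1 ≤ t) :
    -1 ≤ riccatiSolution a (1 - a) t := by
  have hE : Real.exp (-a * (t + 1)) ≤ 1 := Real.exp_le_one_iff.2 (by nlinarith)
  rw [riccatiSolution, le_div_iff_of_neg (sub_exp_neg (by linarith) t)]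
  nlinarith

lemma tendsto_riccatiSolution_atTop (ha : 0 < a) (hc : c ≠ 0) :
    Tendsto (riccatiSolution a c) atTop (𝓝 0) := by
  have hE := tendsto_exp_neg_mul_add_one_atTop ha
  have h := (tendsto_const_nhds (x := a)).mul hE |>.div (tendsto_const_nhds.sub hE)
    (by simpa using hc)
  rwa [mul_zero, zero_div] at h

end DampedBurgers

open DampedBurgers

/-- For `a ≥ 1` the slope `w(t) = a e^{-a(t+1)}/((1-a) - e^{-a(t+1)})` along the
critical characteristic of the damped Burgers equation is globally defined on
`[-1, ∞)`, solves the Riccati equation `w' = -w² - aw` with `w(-1) = -1`, satisfies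
`-1 ≤ w(t) < 0`, is identically `-1` if `a = 1`, and tends to `0` if `a > 1`. -/
theorem damped_burgers_no_blowup_slope
    (a : ℝ) (ha : 1 ≤ a) (w : ℝ → ℝ)
    (hw : ∀ t : ℝ, w t =
      a * Real.exp (-a * (t + 1)) / ((1 - a) - Real.exp (-a * (t + 1)))) :
    (∀ t : ℝ, -1 ≤ t → (1 - a) - Real.exp (-a * (t + 1)) ≠ 0) ∧
    w (-1) = -1 ∧
    ContDiffOn ℝ 1 w (Ici (-1)) ∧
    (∀ t : ℝ, -1 ≤ t → HasDerivAt w (-w t ^ 2 - a * w t) t) ∧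
    (∀ t : ℝ, -1 ≤ t → -1 ≤ w t ∧ w t < 0) ∧
    (a = 1 → ∀ t : ℝ, -1 ≤ t → w t = -1) ∧
    (1 < a → Tendsto w atTop (nhds 0)) := by
  obtain rfl : w = riccatiSolution a (1 - a) := funext hw
  have ha0 : 0 < a := by linarith
  have hc : 1 - a ≤ 0 := by linarith
  have hD (t : ℝ) : (1 - a) - Real.exp (-a * (t + 1)) ≠ 0 := (sub_exp_neg hc t).ne
  refine ⟨fun t _ => hD t, riccatiSolution_one_sub_neg_one ha0.ne',
    (contDiff_riccatiSolution hD).contDiffOn, fun t _ => hasDerivAt_riccatiSolution (hD t),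
    fun t ht => ⟨neg_one_le_riccatiSolution_one_sub ha ht, riccatiSolution_neg ha0 hc t⟩,
    ?_, fun h => tendsto_riccatiSolution_atTop ha0 (by linarith)⟩
  rintro rfl t -
  simpa using riccatiSolution_zero 1 t
end

section
/- Let η(y) = 1 + y₁² + (y₂² + y₃²)³ for y ∈ ℝ³, and let -1/2 ≤ α ≤ 0 ≤ β with α + β > 0. Then there is a constant C = C(α, β), independent of s★ and s₀, such that for every s₀ ≥ 0, every s★ ∈ ℝ, and every continuous Φ : [s₀, ∞) → ℝ³ satisfying |Φ₁(s)| ≥ min{ e^{s/2}, |e^{s/2} - e^{s★/2}| } for all s ≥ s₀, one has ∫_{s₀}^{∞} e^{-αs} η(Φ(s))^{-β} ds ≤ C. -/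
/-
Write `m(s) = min(e^{s/2}, |e^{s/2} - e^{s★/2}|)`, so that `η(Φ(s)) ≥ 1 + m(s)²`. At distance at
least `2` from `s★` one has `m(s) ≥ e^{s/2}/2`, and the weight is at most `4^β e^{-(α+β)s}`, whose
integral over `s ≥ 0` is finite. Within distance `2` of `s★` the mean value inequality for `exp`
gives `m(s) ≥ c|s - s★|` with `c = e^{s★/2-2}`, while `e^{-αs} ≤ e^{-6α} c^{-2α}`; the weight is
then bounded by `e^{-6α} c^γ (1 + c²t²)^{-β}` with `t = s - s★` and `γ = -2α`. The integral of
`c^γ (1 + c²t²)^{-β}` over `|t| ≤ 2` is bounded uniformly in `c > 0`: for `γ < 1` by the integrable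
`|t|^{-γ}`, and for `γ = 1` (where `2β > 1`) by rescaling to `∫ (1 + r²)^{-β} dr < ∞`.
-/

open Set MeasureTheory Real

theorem Real.exp_min_mul_abs_sub_le (x y : ℝ) :
    exp (min x y) * |x - y| ≤ |exp x - exp y| := by
  wlog hxy : x ≤ y generalizing x y
  · simpa only [min_comm, abs_sub_comm] using this y x (le_of_not_ge hxy)
  have hexp : exp x * (y - x) ≤ exp y - exp x := by
    have := mul_le_mul_of_nonneg_left (add_one_le_exp (y - x)) (exp_pos x).le
    rw [← exp_add, add_sub_cancel] at this
    linarith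
  rwa [min_eq_left hxy, abs_sub_comm, abs_of_nonneg (sub_nonneg.2 hxy), abs_sub_comm,
    abs_of_nonneg (sub_nonneg.2 (exp_le_exp.2 hxy))]

theorem one_add_sq_rpow_neg_le_rpow_neg {x γ β : ℝ} (hx : 0 < x) (hγ : 0 ≤ γ) (hγβ : γ ≤ 2 * β) :
    (1 + x ^ 2) ^ (-β) ≤ x ^ (-γ) := calc
  (1 + x ^ 2) ^ (-β) ≤ (1 + x ^ 2) ^ (-(γ / 2)) :=
    rpow_le_rpow_of_exponent_le (by nlinarith) (by linarith)
  _ ≤ (x ^ 2) ^ (-(γ / 2)) := rpow_le_rpow_of_nonpos (by positivity) (by linarith) (by linarith)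
  _ = x ^ (-γ) := by
    rw [← rpow_natCast, ← rpow_mul hx.le]; ring_nf

theorem continuous_rpow_mul_one_add_sq_rpow (γ β c : ℝ) :
    Continuous fun r : ℝ => c ^ γ * (1 + (c * r) ^ 2) ^ (-β) :=
  ((by fun_prop : Continuous fun r : ℝ => 1 + (c * r) ^ 2).rpow_const
    fun r => Or.inl (by positivity)).const_mul _

theorem exists_forall_setIntegral_rpow_mul_one_add_sq_rpow_le {γ β : ℝ} (hγ : 0 ≤ γ)
    (hγ1 : γ ≤ 1) (hγβ : γ < 2 * β) :
    ∃ K, ∀ c : ℝ, 0 < c → ∫ r in Ioc 0 2, c ^ γ * (1 + (c * r) ^ 2) ^ (-β) ≤ K := by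
  rcases hγ1.lt_or_eq with hγ1 | rfl
  · -- uniformly in `c`, the integrand is dominated by the integrable `r ^ (-γ)`
    refine ⟨∫ r in Ioc 0 2, r ^ (-γ), fun c hc => ?_⟩
    refine setIntegral_mono_on ?_ (intervalIntegral.intervalIntegrable_rpow' (by linarith)).1
      measurableSet_Ioc fun r hr => ?_
    · exact (continuous_rpow_mul_one_add_sq_rpow γ β c).integrableOn_Icc.mono_set
        Ioc_subset_Icc_self
    calc c ^ γ * (1 + (c * r) ^ 2) ^ (-β) ≤ c ^ γ * (c * r) ^ (-γ) := by
          gcongr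
          exact one_add_sq_rpow_neg_le_rpow_neg (by positivity [hr.1]) hγ hγβ.le
      _ = r ^ (-γ) := by
          rw [mul_rpow hc.le hr.1.le, ← mul_assoc, ← rpow_add hc, add_neg_cancel, rpow_zero,
            one_mul]
  · -- for `γ = 1` the substitution `r ↦ c * r` removes `c` altogether
    have hI : Integrable fun r : ℝ => (1 + r ^ 2) ^ (-β) := by
      convert integrable_rpow_neg_one_add_norm_sq (E := ℝ) (μ := volume) (r := 2 * β)
        (by simpa using hγβ) using 3 with r
      · rw [norm_eq_abs, sq_abs]
      · ring
    refine ⟨∫ r in Ioi 0, (1 + r ^ 2) ^ (-β), fun c hc => ?_⟩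
    calc ∫ r in Ioc 0 2, c ^ (1 : ℝ) * (1 + (c * r) ^ 2) ^ (-β)
        ≤ ∫ r in Ioi 0, c * (1 + (c * r) ^ 2) ^ (-β) := by
          simp only [rpow_one]
          refine setIntegral_mono_set ?_ ?_ Ioc_subset_Ioi_self.eventuallyLE
          · exact ((hI.comp_mul_left' hc.ne').const_mul c).integrableOn
          · exact ae_of_all _ fun r => by positivity
      _ = ∫ r in Ioi 0, (1 + r ^ 2) ^ (-β) := by
          rw [integral_const_mul, integral_comp_mul_left_Ioi (fun r => (1 + r ^ 2) ^ (-β)) 0 hc,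
            mul_zero, smul_eq_mul, mul_inv_cancel_left₀ hc.ne']

theorem integrable_indicator_Iic_comp_abs_sub {H : ℝ → ℝ} (hH : Continuous H) (R a : ℝ) :
    Integrable fun s => (Iic R).indicator H |s - a| := by
  have hmem : ∀ s, |s - a| ∈ Iic R ↔ s ∈ Icc (a - R) (a + R) := fun s => by
    rw [mem_Iic, abs_sub_le_iff, mem_Icc]
    constructor <;> rintro ⟨h₁, h₂⟩ <;> constructor <;> linarith
  refine IntegrableOn.integrable_of_forall_notMem_eq_zero (s := Icc (a - R) (a + R)) ?_
    fun s hs => indicator_of_notMem (mt (hmem s).1 hs) H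
  exact ((hH.comp (continuous_abs.comp (continuous_sub_right a))).integrableOn_Icc).congr_fun
    (fun s hs => (indicator_of_mem ((hmem s).2 hs) H).symm) measurableSet_Icc

theorem integral_indicator_Iic_comp_abs_sub (H : ℝ → ℝ) (R a : ℝ) :
    ∫ s, (Iic R).indicator H |s - a| = 2 * ∫ r in Ioc 0 R, H r := by
  rw [integral_sub_right_eq_self (fun t => (Iic R).indicator H |t|) a, integral_comp_abs,
    setIntegral_indicator measurableSet_Iic, Ioi_inter_Iic]

noncomputable def lowerEnvelope (sstar s : ℝ) : ℝ :=
  min (exp (s / 2)) |exp (s / 2) - exp (sstar / 2)|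

theorem exp_half_div_two_le_lowerEnvelope {sstar s : ℝ} (h : 2 ≤ |s - sstar|) :
    exp (s / 2) / 2 ≤ lowerEnvelope sstar s := by
  refine le_min (by linarith [exp_pos (s / 2)]) ?_
  rcases le_abs'.1 h with h | h
  · have : exp (s / 2) * exp 1 ≤ exp (sstar / 2) := by
      rw [← exp_add]; exact exp_le_exp.2 (by linarith)
    rw [abs_sub_comm, abs_of_nonneg (by nlinarith [exp_pos (s / 2), exp_one_gt_two.le])]
    nlinarith [exp_pos (s / 2), exp_one_gt_two.le]
  · have : exp (sstar / 2) * exp 1 ≤ exp (s / 2) := by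
      rw [← exp_add]; exact exp_le_exp.2 (by linarith)
    rw [abs_of_nonneg (by nlinarith [exp_pos (sstar / 2), exp_one_gt_two.le])]
    nlinarith [exp_pos (sstar / 2), exp_one_gt_two.le]

theorem exp_mul_abs_sub_le_lowerEnvelope {sstar s : ℝ} (h : |s - sstar| ≤ 2) :
    exp (sstar / 2 - 2) * |s - sstar| ≤ lowerEnvelope sstar s := by
  have hmin : 2 * exp (sstar / 2 - 2) ≤ exp (min (s / 2) (sstar / 2)) := calc
    2 * exp (sstar / 2 - 2) ≤ exp 1 * exp (sstar / 2 - 2) := by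
      gcongr; exact exp_one_gt_two.le
    _ ≤ exp (min (s / 2) (sstar / 2)) := by
      rw [← exp_add]
      exact exp_le_exp.2 (le_min (by linarith [(abs_sub_le_iff.1 h).2]) (by linarith))
  have hmean := exp_min_mul_abs_sub_le (s / 2) (sstar / 2)
  rw [← sub_div, abs_div, abs_two] at hmean
  refine le_min ?_ ?_
  · nlinarith [exp_le_exp.2 (min_le_left (s / 2) (sstar / 2)), exp_pos (sstar / 2 - 2)]
  · nlinarith [abs_nonneg (s - sstar)]

noncomputable def weightMajorant (α β sstar s : ℝ) : ℝ :=
  4 ^ β * exp (-(α + β) * s) + exp (-6 * α) * (Iic 2).indicator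
    (fun r => exp (sstar / 2 - 2) ^ (-2 * α) * (1 + (exp (sstar / 2 - 2) * r) ^ 2) ^ (-β))
    |s - sstar|

theorem weight_le_weightMajorant {α β : ℝ} (hα : α ≤ 0) (hβ : 0 ≤ β) (sstar s : ℝ) :
    exp (-α * s) * (1 + lowerEnvelope sstar s ^ 2) ^ (-β) ≤ weightMajorant α β sstar s := by
  have hm : 0 ≤ lowerEnvelope sstar s := le_min (exp_pos _).le (abs_nonneg _)
  unfold weightMajorant
  rcases le_or_gt 2 |s - sstar| with h | h
  · have hsq : exp s / 4 ≤ 1 + lowerEnvelope sstar s ^ 2 := by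
      have := pow_le_pow_left₀ (by positivity) (exp_half_div_two_le_lowerEnvelope h) 2
      rw [div_pow, ← exp_nat_mul, Nat.cast_ofNat, mul_div_cancel₀ _ two_ne_zero] at this
      linarith
    have hinner : 0 ≤ exp (-6 * α) * (Iic 2).indicator (fun r => exp (sstar / 2 - 2) ^ (-2 * α) *
        (1 + (exp (sstar / 2 - 2) * r) ^ 2) ^ (-β)) |s - sstar| :=
      mul_nonneg (exp_pos _).le (indicator_nonneg (fun r _ => by positivity) _)
    calc exp (-α * s) * (1 + lowerEnvelope sstar s ^ 2) ^ (-β)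
        ≤ exp (-α * s) * (exp s / 4) ^ (-β) :=
          mul_le_mul_of_nonneg_left
            (rpow_le_rpow_of_nonpos (by positivity) hsq (by linarith)) (exp_pos _).le
      _ = 4 ^ β * exp (-(α + β) * s) := by
          rw [div_rpow (exp_pos s).le (by norm_num), ← exp_mul, rpow_neg (by norm_num),
            div_inv_eq_mul, show -(α + β) * s = -α * s + s * -β by ring, exp_add]
          ring
      _ ≤ _ := le_add_of_nonneg_right hinner
  · rw [indicator_of_mem (show |s - sstar| ∈ Iic 2 from h.le)]
    have hexp : exp (-α * s) ≤ exp (-6 * α) * exp (sstar / 2 - 2) ^ (-2 * α) := by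
      rw [← exp_mul, ← exp_add]
      exact exp_le_exp.2 (by nlinarith [(abs_sub_lt_iff.1 h).1])
    have hbase : (1 + lowerEnvelope sstar s ^ 2) ^ (-β)
        ≤ (1 + (exp (sstar / 2 - 2) * |s - sstar|) ^ 2) ^ (-β) := by
      refine rpow_le_rpow_of_nonpos (by positivity) ?_ (by linarith)
      gcongr
      exact exp_mul_abs_sub_le_lowerEnvelope h.le
    calc exp (-α * s) * (1 + lowerEnvelope sstar s ^ 2) ^ (-β)
        ≤ exp (-6 * α) * exp (sstar / 2 - 2) ^ (-2 * α) *
            (1 + (exp (sstar / 2 - 2) * |s - sstar|) ^ 2) ^ (-β) :=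
          mul_le_mul hexp hbase (by positivity) (by positivity)
      _ ≤ _ := by
          rw [mul_assoc]
          exact le_add_of_nonneg_left (by positivity)

theorem integrableOn_weightMajorant {α β : ℝ} (hαβ : 0 < α + β) (sstar s₀ : ℝ) :
    IntegrableOn (weightMajorant α β sstar) (Ioi s₀) :=
  ((exp_neg_integrableOn_Ioi s₀ hαβ).const_mul _).add
    (((integrable_indicator_Iic_comp_abs_sub
      (continuous_rpow_mul_one_add_sq_rpow _ _ _) 2 sstar).const_mul _).integrableOn)

theorem exists_forall_setIntegral_weightMajorant_le {α β : ℝ} (hα : -(1 / 2) ≤ α) (hα0 : α ≤ 0)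
    (hαβ : 0 < α + β) :
    ∃ C, ∀ s₀ : ℝ, 0 ≤ s₀ → ∀ sstar : ℝ, ∫ s in Ioi s₀, weightMajorant α β sstar s ≤ C := by
  obtain ⟨K, hK⟩ := exists_forall_setIntegral_rpow_mul_one_add_sq_rpow_le (γ := -2 * α) (β := β)
    (by linarith) (by linarith) (by linarith)
  refine ⟨(∫ s in Ioi 0, 4 ^ β * exp (-(α + β) * s)) + exp (-6 * α) * (2 * K),
    fun s₀ hs₀ sstar => ?_⟩
  have hbump := integrable_indicator_Iic_comp_abs_sub
    (continuous_rpow_mul_one_add_sq_rpow (-2 * α) β (exp (sstar / 2 - 2))) 2 sstar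
  unfold weightMajorant
  rw [integral_add ((exp_neg_integrableOn_Ioi s₀ hαβ).const_mul _)
    (hbump.const_mul _).integrableOn, integral_const_mul (exp (-6 * α))]
  refine add_le_add ?_ (mul_le_mul_of_nonneg_left ?_ (exp_pos _).le)
  · exact setIntegral_mono_set ((exp_neg_integrableOn_Ioi 0 hαβ).const_mul _)
      (ae_of_all _ fun s => (by positivity : (0 : ℝ) ≤ 4 ^ β * exp (-(α + β) * s)))
      (Ioi_subset_Ioi hs₀).eventuallyLE
  · calc _ ≤ ∫ s, (Iic 2).indicator (fun r => exp (sstar / 2 - 2) ^ (-2 * α) *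
            (1 + (exp (sstar / 2 - 2) * r) ^ 2) ^ (-β)) |s - sstar| :=
          setIntegral_le_integral hbump
            (ae_of_all _ fun s => indicator_nonneg (fun r _ => by positivity) _)
      _ ≤ 2 * K := by
          rw [integral_indicator_Iic_comp_abs_sub]
          gcongr
          exact hK _ (exp_pos _)

theorem one_add_sq_add_rpow_neg_le {β m : ℝ} {y : Fin 3 → ℝ} (hβ : 0 ≤ β) (hm : 0 ≤ m)
    (h : m ≤ |y 0|) : (1 + y 0 ^ 2 + (y 1 ^ 2 + y 2 ^ 2) ^ 3) ^ (-β) ≤ (1 + m ^ 2) ^ (-β) := by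
  refine rpow_le_rpow_of_nonpos (by positivity) ?_ (by linarith)
  have := pow_le_pow_left₀ hm h 2
  rw [sq_abs] at this
  nlinarith [pow_nonneg (add_nonneg (sq_nonneg (y 1)) (sq_nonneg (y 2))) 3]

/-- Uniform integrability of the weight `θ(α,β)(y,s) = e^{-αs} η(y)^{-β}`, with
`η(y) = 1 + y₁² + (y₂² + y₃²)³`, along trajectories whose first component satisfies
`|Φ₁(s)| ≥ min(e^{s/2}, |e^{s/2} - e^{s★/2}|)`: for `-1/2 ≤ α ≤ 0 ≤ β` with
`α + β > 0` there is `C = C(α,β)`, independent of `s₀ ≥ 0` and `s★`, bounding the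
integral. -/
theorem weight_integrable_along_ZU_trajectories
    (α β : ℝ) (hα : -(1 / 2) ≤ α) (hα0 : α ≤ 0) (hβ : 0 ≤ β) (hαβ : 0 < α + β) :
    ∃ C : ℝ, ∀ s₀ : ℝ, 0 ≤ s₀ → ∀ sstar : ℝ, ∀ Φ : ℝ → Fin 3 → ℝ,
      ContinuousOn Φ (Ici s₀) →
      (∀ s : ℝ, s₀ ≤ s →
        min (Real.exp (s / 2)) |Real.exp (s / 2) - Real.exp (sstar / 2)|
          ≤ |Φ s 0|) →
      IntegrableOn
        (fun s : ℝ => Real.exp (-α * s)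
          * (1 + Φ s 0 ^ 2 + (Φ s 1 ^ 2 + Φ s 2 ^ 2) ^ 3) ^ (-β)) (Ioi s₀) ∧
      ∫ s in Ioi s₀,
          Real.exp (-α * s)
            * (1 + Φ s 0 ^ 2 + (Φ s 1 ^ 2 + Φ s 2 ^ 2) ^ 3) ^ (-β)
        ≤ C := by
  obtain ⟨C, hC⟩ := exists_forall_setIntegral_weightMajorant_le hα hα0 hαβ
  refine ⟨C, fun s₀ hs₀ sstar Φ hΦ hΦ₀ => ?_⟩
  have hle : ∀ s ∈ Ioi s₀, exp (-α * s) * (1 + Φ s 0 ^ 2 + (Φ s 1 ^ 2 + Φ s 2 ^ 2) ^ 3) ^ (-β)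
      ≤ weightMajorant α β sstar s := fun s hs =>
    (mul_le_mul_of_nonneg_left (one_add_sq_add_rpow_neg_le hβ
      (le_min (exp_pos _).le (abs_nonneg _)) (hΦ₀ s hs.le)) (exp_pos _).le).trans
      (weight_le_weightMajorant hα0 hβ sstar s)
  have hcont : ContinuousOn (fun s => exp (-α * s) *
      (1 + Φ s 0 ^ 2 + (Φ s 1 ^ 2 + Φ s 2 ^ 2) ^ 3) ^ (-β)) (Ioi s₀) := by
    have hΦi : ∀ i, ContinuousOn (fun s => Φ s i) (Ioi s₀) := fun i =>
      (continuous_apply i).comp_continuousOn (hΦ.mono Ioi_subset_Ici_self)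
    exact (continuous_exp.comp_continuousOn (by fun_prop)).mul
      (ContinuousOn.rpow_const (by fun_prop) fun s _ => Or.inl (by positivity))
  have hmaj := integrableOn_weightMajorant hαβ sstar s₀
  have hint : IntegrableOn (fun s => exp (-α * s) *
      (1 + Φ s 0 ^ 2 + (Φ s 1 ^ 2 + Φ s 2 ^ 2) ^ 3) ^ (-β)) (Ioi s₀) :=
    hmaj.mono' (hcont.aestronglyMeasurable measurableSet_Ioi)
      ((ae_restrict_iff' measurableSet_Ioi).2 (ae_of_all _ fun s hs => by
        rw [norm_of_nonneg (by positivity)]; exact hle s hs))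
  exact ⟨hint, (setIntegral_mono_on hint hmaj measurableSet_Ioi hle).trans (hC s₀ hs₀ sstar)⟩
end

section
/- Let a ≥ 1 and let f ∈ C¹(ℝ) be bounded with f'(ξ) ≥ -1 for all ξ. For t ≥ -1 define g_t(ξ) = ξ + (f(ξ)/a)(1 - e^{-a(t+1)}). Then for each t ≥ -1, g_t is a C¹ diffeomorphism of ℝ (indeed g_t'(ξ) = 1 + (f'(ξ)/a)(1 - e^{-a(t+1)}) ≥ e^{-a(t+1)}/a > 0), and u(x, t) := e^{-a(t+1)} f(g_t^{-1}(x)) defines a C¹ function on ℝ × [-1, ∞) that solves the damped Burgers equation ∂ₜu + u ∂ₓu = -au with u(·, -1) = f. Thus for a ≥ 1 the damping is strong enough to yield a global smooth solution. -/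
/-! For `a ≥ 1`, `f' ≥ -1` and `t ≥ -1` the slope of `g_t` is at least `e^{-a(t+1)}/a > 0`, and
`g_t - id` is bounded, so `g_t` is an increasing bijection of `ℝ`. Applying the implicit function
theorem to `g_t(ξ) - x = 0`, with uniqueness of the solution, makes `(x, t) ↦ g_t⁻¹(x)` jointly C¹,
hence `u` is C¹. Along the characteristic `τ ↦ g_τ(ξ)`, whose speed `f(ξ) e^{-a(τ+1)}` is the value
of `u` there, `u` equals `e^{-a(τ+1)} f(ξ)`; the chain rule applied to this identity is the damped
Burgers equation. -/

open Set Function Filter Topology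

theorem ContinuousLinearMap.isInvertible_of_apply_one_ne_zero {𝕜 : Type*}
    [NontriviallyNormedField 𝕜] {L : 𝕜 →L[𝕜] 𝕜} (h : L 1 ≠ 0) : L.IsInvertible :=
  .of_inverse (g := (L 1)⁻¹ • .id 𝕜 𝕜) (by ext; simp [h]) (by ext; simp [h])

theorem isInvertible_fderiv_comp_inr_of_hasDerivAt {𝕜 P : Type*} [NontriviallyNormedField 𝕜]
    [NormedAddCommGroup P] [NormedSpace 𝕜 P] {F : P × 𝕜 → 𝕜} {p : P} {ξ d : 𝕜}
    (hF : DifferentiableAt 𝕜 F (p, ξ)) (hd : HasDerivAt (fun η => F (p, η)) d ξ) (hd₀ : d ≠ 0) :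
    (fderiv 𝕜 F (p, ξ) ∘L .inr 𝕜 P 𝕜).IsInvertible := by
  have hpartial : HasFDerivAt (fun η => F (p, η)) (fderiv 𝕜 F (p, ξ) ∘L .inr 𝕜 P 𝕜) ξ :=
    hF.hasFDerivAt.comp ξ (hasFDerivAt_prodMk_right p ξ)
  refine ContinuousLinearMap.isInvertible_of_apply_one_ne_zero ?_
  rwa [hpartial.unique hd.hasFDerivAt, ContinuousLinearMap.toSpanSingleton_apply, one_smul]

/-- Injectivity on `s` identifies `ψ` with the local implicit function of `Φ` near `p`. -/
theorem contDiffWithinAt_implicit_of_injective {𝕜 P E F : Type*} [RCLike 𝕜]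
    [NormedAddCommGroup P] [NormedSpace 𝕜 P] [CompleteSpace P]
    [NormedAddCommGroup E] [NormedSpace 𝕜 E] [CompleteSpace E]
    [NormedAddCommGroup F] [NormedSpace 𝕜 F] [CompleteSpace F]
    {Φ : P × E → F} {ψ : P → E} {s : Set P} {p : P} {n : WithTop ℕ∞} (hn : n ≠ 0)
    (hΦ : ContDiffAt 𝕜 n Φ (p, ψ p))
    (hΦ' : (fderiv 𝕜 Φ (p, ψ p) ∘L .inr 𝕜 P E).IsInvertible)
    (hsol : ∀ q ∈ s, Φ (q, ψ q) = 0) (hinj : ∀ q ∈ s, Injective fun η => Φ (q, η)) (hp : p ∈ s) :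
    ContDiffWithinAt 𝕜 n ψ s p := by
  set χ := hΦ.implicitFunction hn hΦ'
  have hχp : χ p = ψ p := hΦ.implicitFunction_apply_self hn hΦ'
  have hχ : ∀ᶠ q in 𝓝 p, Φ (q, χ q) = 0 := by
    simpa only [hsol p hp] using hΦ.eventually_apply_implicitFunction hn hΦ'
  refine (hΦ.contDiffAt_implicitFunction hn hΦ').contDiffWithinAt.congr_of_eventuallyEq
    ?_ hχp.symm
  filter_upwards [nhdsWithin_le_nhds hχ, self_mem_nhdsWithin] with q hq hqs
  exact hinj q hqs ((hsol q hqs).trans hq.symm)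

theorem Continuous.surjective_of_abs_sub_le {g : ℝ → ℝ} (hg : Continuous g) {M : ℝ}
    (hM : ∀ x, |g x - x| ≤ M) : Surjective g := by
  refine hg.surjective
    (tendsto_atTop_mono (fun x => ?_) (tendsto_atTop_add_const_right _ (-M) tendsto_id))
    (tendsto_atBot_mono (fun x => ?_) (tendsto_atBot_add_const_right _ M tendsto_id)) <;>
  simp only [id] <;> linarith [abs_le.1 (hM x)]

theorem transport_equation_of_characteristic {u : ℝ → ℝ → ℝ} {X w : ℝ → ℝ} {T : Set ℝ}
    {x t v w' : ℝ} (ht : t ∈ T) (hT : UniqueDiffWithinAt ℝ T t)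
    (hu : DifferentiableWithinAt ℝ (fun p : ℝ × ℝ => u p.1 p.2) {p | p.2 ∈ T} (x, t))
    (hX : HasDerivWithinAt X v T t) (hXt : X t = x) (hw : HasDerivWithinAt w w' T t)
    (hchar : ∀ τ ∈ T, u (X τ) τ = w τ) :
    ∃ ut, HasDerivWithinAt (fun τ => u x τ) ut T t ∧ ut + v * deriv (fun y => u y t) x = w' := by
  set L := fderivWithin ℝ (fun p : ℝ × ℝ => u p.1 p.2) {p | p.2 ∈ T} (x, t)
  have hL := hu.hasFDerivWithinAt
  have hspace : HasDerivAt (fun y => u y t) (L (1, 0)) x := by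
    have h := hL.comp_hasDerivWithinAt x
      ((hasDerivAt_id x).prodMk (hasDerivAt_const x t)).hasDerivWithinAt (s := univ) fun _ _ => ht
    exact hasDerivWithinAt_univ.1 h
  have htime : HasDerivWithinAt (fun τ => u x τ) (L (0, 1)) T t :=
    hL.comp_hasDerivWithinAt t ((hasDerivAt_const t x).prodMk (hasDerivAt_id t)).hasDerivWithinAt
      (fun τ hτ => hτ)
  have halong : HasDerivWithinAt (fun τ => u (X τ) τ) (L (v, 1)) T t :=
    hL.comp_hasDerivWithinAt_of_eq t (hX.prodMk (hasDerivWithinAt_id t T)) (fun τ hτ => hτ)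
      (by rw [hXt]; rfl)
  have hw' : w' = L (v, 1) :=
    hT.eq_deriv _ hw (halong.congr (fun τ hτ => (hchar τ hτ).symm) (hchar t ht).symm)
  refine ⟨L (0, 1), htime, ?_⟩
  rw [hspace.deriv, hw']
  have hv : ((v, 1) : ℝ × ℝ) = v • ((1, 0) : ℝ × ℝ) + (0, 1) := by ext <;> simp
  rw [hv, map_add, map_smul, smul_eq_mul]
  ring

theorem div_le_one_add_div_mul_one_sub {a d e : ℝ} (ha : 1 ≤ a) (hd : -1 ≤ d) (he : e ≤ 1) :
    e / a ≤ 1 + d / a * (1 - e) := by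
  have hprod : 0 ≤ (1 + d) * (1 - e) := mul_nonneg (by linarith) (by linarith)
  have ha₀ : 0 < a := by linarith
  rw [div_le_iff₀ ha₀, add_mul, div_mul_eq_mul_div, div_mul_cancel₀ _ ha₀.ne']
  nlinarith

theorem hasDerivAt_exp_neg_mul_add_one (a t : ℝ) :
    HasDerivAt (fun τ => Real.exp (-a * (τ + 1))) (-a * Real.exp (-a * (t + 1))) t := by
  simpa [mul_comm] using (((hasDerivAt_id t).add_const 1).const_mul (-a)).exp

noncomputable def burgersChar (a : ℝ) (f : ℝ → ℝ) (t ξ : ℝ) : ℝ :=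
  ξ + f ξ / a * (1 - Real.exp (-a * (t + 1)))

namespace burgersChar

variable {a : ℝ} {f : ℝ → ℝ}

theorem neg_one_eq_id : burgersChar a f (-1) = id := by
  ext ξ; simp [burgersChar]

theorem contDiff_uncurry {n : WithTop ℕ∞} (hf : ContDiff ℝ n f) :
    ContDiff ℝ n fun q : ℝ × ℝ => burgersChar a f q.1 q.2 := by
  unfold burgersChar; fun_prop

theorem hasDerivAt {t ξ : ℝ} (hf : DifferentiableAt ℝ f ξ) :
    HasDerivAt (burgersChar a f t) (1 + deriv f ξ / a * (1 - Real.exp (-a * (t + 1)))) ξ :=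
  (hasDerivAt_id ξ).add ((hf.hasDerivAt.div_const a).mul_const _)

theorem hasDerivAt_time (ha : a ≠ 0) (t ξ : ℝ) :
    HasDerivAt (fun τ => burgersChar a f τ ξ) (f ξ * Real.exp (-a * (t + 1))) t := by
  refine (((hasDerivAt_exp_neg_mul_add_one a t).const_sub 1).const_mul (f ξ / a)).const_add ξ
    |>.congr_deriv ?_
  field_simp

theorem exp_div_le_deriv (ha : 1 ≤ a) (hf' : ∀ ξ, -1 ≤ deriv f ξ) {t : ℝ} (ht : -1 ≤ t) (ξ : ℝ) :
    Real.exp (-a * (t + 1)) / a ≤ 1 + deriv f ξ / a * (1 - Real.exp (-a * (t + 1))) :=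
  div_le_one_add_div_mul_one_sub ha (hf' ξ) (Real.exp_le_one_iff.2 (by nlinarith))

theorem strictMono (ha : 1 ≤ a) (hf : Differentiable ℝ f) (hf' : ∀ ξ, -1 ≤ deriv f ξ) {t : ℝ}
    (ht : -1 ≤ t) : StrictMono (burgersChar a f t) :=
  strictMono_of_hasDerivAt_pos (fun ξ => hasDerivAt (hf ξ)) fun ξ =>
    (div_pos (Real.exp_pos _) (by linarith)).trans_le (exp_div_le_deriv ha hf' ht ξ)

theorem surjective (ha : 0 < a) (hf : Continuous f) (hfb : ∃ M, ∀ x, |f x| ≤ M) {t : ℝ}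
    (ht : -1 ≤ t) : Surjective (burgersChar a f t) := by
  obtain ⟨M, hM⟩ := hfb
  have hexp : Real.exp (-a * (t + 1)) ≤ 1 := Real.exp_le_one_iff.2 (by nlinarith)
  refine Continuous.surjective_of_abs_sub_le (M := M / a) (by unfold burgersChar; fun_prop)
    fun ξ => ?_
  calc |burgersChar a f t ξ - ξ| = |f ξ / a| * |1 - Real.exp (-a * (t + 1))| := by
        simp [burgersChar, abs_mul]
    _ ≤ |f ξ / a| := mul_le_of_le_one_right (abs_nonneg _)
        (abs_le.2 ⟨by linarith, by linarith [Real.exp_pos (-a * (t + 1))]⟩)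
    _ ≤ M / a := by rw [abs_div, abs_of_pos ha]; gcongr; exact hM ξ

theorem bijective (ha : 1 ≤ a) (hf : ContDiff ℝ 1 f) (hfb : ∃ M, ∀ x, |f x| ≤ M)
    (hf' : ∀ ξ, -1 ≤ deriv f ξ) {t : ℝ} (ht : -1 ≤ t) : Bijective (burgersChar a f t) :=
  ⟨(strictMono ha (hf.differentiable one_ne_zero) hf' ht).injective,
    surjective (by linarith) hf.continuous hfb ht⟩

end burgersChar

theorem contDiffOn_invFun_burgersChar {a : ℝ} {f : ℝ → ℝ} (ha : 1 ≤ a) (hf : ContDiff ℝ 1 f)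
    (hfb : ∃ M, ∀ x, |f x| ≤ M) (hf' : ∀ ξ, -1 ≤ deriv f ξ) :
    ContDiffOn ℝ 1 (fun p : ℝ × ℝ => invFun (burgersChar a f p.2) p.1) {p | -1 ≤ p.2} := by
  have hfd : Differentiable ℝ f := hf.differentiable one_ne_zero
  intro p hp
  have hΦ : ContDiff ℝ 1 fun q : (ℝ × ℝ) × ℝ => burgersChar a f q.1.2 q.2 - q.1.1 :=
    ((burgersChar.contDiff_uncurry hf).comp (contDiff_fst.snd.prodMk contDiff_snd)).sub
      contDiff_fst.fst
  have hpartial (ξ : ℝ) : HasDerivAt (fun η => burgersChar a f p.2 η - p.1)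
      (1 + deriv f ξ / a * (1 - Real.exp (-a * (p.2 + 1)))) ξ :=
    (burgersChar.hasDerivAt (hfd ξ)).sub_const p.1
  have hpos (ξ : ℝ) : 0 < 1 + deriv f ξ / a * (1 - Real.exp (-a * (p.2 + 1))) :=
    (div_pos (Real.exp_pos _) (by linarith)).trans_le (burgersChar.exp_div_le_deriv ha hf' hp ξ)
  refine contDiffWithinAt_implicit_of_injective one_ne_zero hΦ.contDiffAt
    (isInvertible_fderiv_comp_inr_of_hasDerivAt (hΦ.differentiable one_ne_zero _) (hpartial _)
      (hpos _).ne')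
    (fun q hq => sub_eq_zero.2 ?_) (fun q hq => ?_) hp
  · exact rightInverse_invFun (burgersChar.bijective ha hf hfb hf' hq).2 q.1
  · exact fun η₁ η₂ h => (burgersChar.bijective ha hf hfb hf' hq).1 (sub_left_inj.1 h)

/-- Global existence for the damped Burgers equation with strong damping `a ≥ 1`:
for bounded C¹ data `f` with `f' ≥ -1`, the characteristic maps
`g_t(ξ) = ξ + (f(ξ)/a)(1 - e^{-a(t+1)})` are C¹ diffeomorphisms of ℝ, and
`u(x,t) = e^{-a(t+1)} f(g_t⁻¹(x))` is a global C¹ solution of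
`∂ₜu + u ∂ₓu = -a u` with `u(·,-1) = f`. -/
theorem damped_burgers_global_existence
    (a : ℝ) (ha : 1 ≤ a) (f : ℝ → ℝ)
    (hf : ContDiff ℝ 1 f) (hfb : ∃ M : ℝ, ∀ x : ℝ, |f x| ≤ M)
    (hf' : ∀ ξ : ℝ, -1 ≤ deriv f ξ)
    (G : ℝ → ℝ → ℝ)
    (hG : ∀ t ξ : ℝ, G t ξ = ξ + f ξ / a * (1 - Real.exp (-a * (t + 1))))
    (u : ℝ → ℝ → ℝ)
    (hu : ∀ x t : ℝ, u x t = Real.exp (-a * (t + 1)) * f (Function.invFun (G t) x)) :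
    (∀ t : ℝ, -1 ≤ t → Function.Bijective (G t) ∧ ContDiff ℝ 1 (G t) ∧
      ContDiff ℝ 1 (Function.invFun (G t))) ∧
    (∀ t ξ : ℝ, -1 ≤ t →
      HasDerivAt (G t) (1 + deriv f ξ / a * (1 - Real.exp (-a * (t + 1)))) ξ ∧
      Real.exp (-a * (t + 1)) / a
        ≤ 1 + deriv f ξ / a * (1 - Real.exp (-a * (t + 1))) ∧
      0 < Real.exp (-a * (t + 1)) / a) ∧
    ContDiffOn ℝ 1 (fun p : ℝ × ℝ => u p.1 p.2) {p : ℝ × ℝ | -1 ≤ p.2} ∧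
    (∀ x : ℝ, u x (-1) = f x) ∧
    (∀ x t : ℝ, -1 ≤ t →
      ∃ ut : ℝ, HasDerivWithinAt (fun t' => u x t') ut (Ici (-1 : ℝ)) t ∧
        ut + u x t * deriv (fun x' => u x' t) x = -a * u x t) := by
  obtain rfl : G = burgersChar a f := funext fun t => funext (hG t)
  have hfd : Differentiable ℝ f := hf.differentiable one_ne_zero
  have hbij (t : ℝ) (ht : -1 ≤ t) := burgersChar.bijective ha hf hfb hf' ht
  have hinv := contDiffOn_invFun_burgersChar ha hf hfb hf'
  have hu_smooth : ContDiffOn ℝ 1 (fun p : ℝ × ℝ => u p.1 p.2) {p | -1 ≤ p.2} := by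
    simp only [hu]
    exact (by fun_prop : ContDiff ℝ 1 fun p : ℝ × ℝ => Real.exp (-a * (p.2 + 1))).contDiffOn.mul
      (hf.comp_contDiffOn hinv)
  refine ⟨fun t ht => ⟨hbij t ht, (burgersChar.contDiff_uncurry hf).comp
      (contDiff_const.prodMk contDiff_id), ?_⟩,
    fun t ξ ht => ⟨burgersChar.hasDerivAt (hfd ξ), burgersChar.exp_div_le_deriv ha hf' ht ξ,
      div_pos (Real.exp_pos _) (by linarith)⟩, hu_smooth, fun x => ?_, fun x t ht => ?_⟩
  · exact contDiffOn_univ.1 (hinv.comp (contDiff_id.prodMk contDiff_const).contDiffOn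
      fun x _ => ht)
  · rw [hu, burgersChar.neg_one_eq_id, show invFun id x = x from leftInverse_invFun injective_id x]
    simp
  · obtain ⟨ξ, rfl⟩ := (hbij t ht).2 x
    have hchar (τ : ℝ) (hτ : τ ∈ Ici (-1)) :
        u (burgersChar a f τ ξ) τ = Real.exp (-a * (τ + 1)) * f ξ := by
      rw [hu, leftInverse_invFun (hbij τ hτ).1]
    obtain ⟨ut, hut, htransport⟩ := transport_equation_of_characteristic ht
      (uniqueDiffOn_Ici _ t ht) (hu_smooth.differentiableOn one_ne_zero _ ht)
      (burgersChar.hasDerivAt_time (by linarith) t ξ).hasDerivWithinAt rfl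
      ((hasDerivAt_exp_neg_mul_add_one a t).mul_const (f ξ)).hasDerivWithinAt hchar
    refine ⟨ut, hut, ?_⟩
    rw [hchar t ht]
    linear_combination htransport
end

section
/- Let u be a C² solution of the Burgers equation ∂ₜu + u ∂ₓu = 0 on an open set Ω ⊆ ℝ² (variables (x, t)). Then at every point of Ω the determinant of the Hessian of u satisfies ∂ₓ²u · ∂ₜ²u - (∂ₓ∂ₜu)² = -(∂ₓu)⁴. Consequently the Gauss curvature of the graph surface {(x, t, u(x, t))} equals K = -(∂ₓu)⁴ / (1 + (∂ₓu)² + (∂ₜu)²)². -/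
/-!
Differentiating the equation `∂ₜu + u ∂ₓu = 0` in `x` and in `t` gives
`∂ₓ∂ₜu + (∂ₓu)² + u ∂ₓ²u = 0` and `∂ₜ²u + ∂ₜu ∂ₓu + u ∂ₜ∂ₓu = 0`. Together with the equation
itself, `∂ₜu = -u ∂ₓu`, and the symmetry of the mixed partials, eliminating `∂ₜ²u` and `∂ₜu`
from `∂ₓ²u ∂ₜ²u - (∂ₓ∂ₜu)²` leaves `(∂ₓu)² (u ∂ₓ²u + ∂ₓ∂ₜu) = -(∂ₓu)⁴`.
-/

open Function Filter Topology

theorem ContDiffAt.eventually_differentiableAt {F E : Type*} [NormedAddCommGroup F]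
    [NormedSpace ℝ F] [NormedAddCommGroup E] [NormedSpace ℝ E] {f : F → E} {p : F} {n : ℕ}
    (h : ContDiffAt ℝ (n + 1) f p) : ∀ᶠ q in 𝓝 p, DifferentiableAt ℝ f q :=
  (h.eventually (by simp)).mono fun _ hq => hq.differentiableAt (by simp)

section PartialDerivatives

variable {E : Type*} [NormedAddCommGroup E] [NormedSpace ℝ E]

noncomputable def partialFst (u : ℝ → ℝ → E) (x y : ℝ) : E := deriv (fun x => u x y) x

noncomputable def partialSnd (u : ℝ → ℝ → E) (x y : ℝ) : E := deriv (fun y => u x y) y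

variable {u : ℝ → ℝ → E} {x y : ℝ}

theorem HasFDerivAt.hasDerivAt_uncurry_left {L : ℝ × ℝ →L[ℝ] E}
    (h : HasFDerivAt (uncurry u) L (x, y)) : HasDerivAt (fun x => u x y) (L (1, 0)) x := by
  simpa [comp_def] using h.comp_hasDerivAt x ((hasDerivAt_id x).prodMk (hasDerivAt_const x y))

theorem HasFDerivAt.hasDerivAt_uncurry_right {L : ℝ × ℝ →L[ℝ] E}
    (h : HasFDerivAt (uncurry u) L (x, y)) : HasDerivAt (fun y => u x y) (L (0, 1)) y := by
  simpa [comp_def] using h.comp_hasDerivAt y ((hasDerivAt_const y x).prodMk (hasDerivAt_id y))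

theorem HasFDerivAt.partialFst_eq {L : ℝ × ℝ →L[ℝ] E} (h : HasFDerivAt (uncurry u) L (x, y)) :
    partialFst u x y = L (1, 0) :=
  h.hasDerivAt_uncurry_left.deriv

theorem HasFDerivAt.partialSnd_eq {L : ℝ × ℝ →L[ℝ] E} (h : HasFDerivAt (uncurry u) L (x, y)) :
    partialSnd u x y = L (0, 1) :=
  h.hasDerivAt_uncurry_right.deriv

theorem DifferentiableAt.hasDerivAt_partialFst (h : DifferentiableAt ℝ (uncurry u) (x, y)) :
    HasDerivAt (fun x => u x y) (partialFst u x y) x :=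
  h.hasFDerivAt.partialFst_eq ▸ h.hasFDerivAt.hasDerivAt_uncurry_left

theorem DifferentiableAt.hasDerivAt_partialSnd (h : DifferentiableAt ℝ (uncurry u) (x, y)) :
    HasDerivAt (fun y => u x y) (partialSnd u x y) y :=
  h.hasFDerivAt.partialSnd_eq ▸ h.hasFDerivAt.hasDerivAt_uncurry_right

theorem partialFst_eq_zero_of_eventuallyEq_zero (h : uncurry u =ᶠ[𝓝 (x, y)] 0) :
    partialFst u x y = 0 :=
  ((hasFDerivAt_const (0 : E) (x, y)).congr_of_eventuallyEq h).partialFst_eq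

theorem partialSnd_eq_zero_of_eventuallyEq_zero (h : uncurry u =ᶠ[𝓝 (x, y)] 0) :
    partialSnd u x y = 0 :=
  ((hasFDerivAt_const (0 : E) (x, y)).congr_of_eventuallyEq h).partialSnd_eq

theorem ContDiffAt.hasFDerivAt_uncurry_partialFst {p : ℝ × ℝ}
    (h : ContDiffAt ℝ 2 (uncurry u) p) :
    HasFDerivAt (uncurry (partialFst u))
      ((ContinuousLinearMap.apply ℝ E ((1 : ℝ), (0 : ℝ))).comp
        (fderiv ℝ (fderiv ℝ (uncurry u)) p)) p := by
  have hD := (ContinuousLinearMap.apply ℝ E ((1 : ℝ), (0 : ℝ))).hasFDerivAt.comp p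
    ((h.fderiv_right (m := 1) le_rfl).differentiableAt one_ne_zero).hasFDerivAt
  exact hD.congr_of_eventuallyEq <|
    (h.eventually_differentiableAt (n := 1)).mono fun _ hq => hq.hasFDerivAt.partialFst_eq

theorem ContDiffAt.hasFDerivAt_uncurry_partialSnd {p : ℝ × ℝ}
    (h : ContDiffAt ℝ 2 (uncurry u) p) :
    HasFDerivAt (uncurry (partialSnd u))
      ((ContinuousLinearMap.apply ℝ E ((0 : ℝ), (1 : ℝ))).comp
        (fderiv ℝ (fderiv ℝ (uncurry u)) p)) p := by
  have hD := (ContinuousLinearMap.apply ℝ E ((0 : ℝ), (1 : ℝ))).hasFDerivAt.comp p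
    ((h.fderiv_right (m := 1) le_rfl).differentiableAt one_ne_zero).hasFDerivAt
  exact hD.congr_of_eventuallyEq <|
    (h.eventually_differentiableAt (n := 1)).mono fun _ hq => hq.hasFDerivAt.partialSnd_eq

theorem partialFst_partialSnd_eq_partialSnd_partialFst
    (h : ContDiffAt ℝ 2 (uncurry u) (x, y)) :
    partialFst (partialSnd u) x y = partialSnd (partialFst u) x y := by
  rw [h.hasFDerivAt_uncurry_partialSnd.partialFst_eq,
    h.hasFDerivAt_uncurry_partialFst.partialSnd_eq]
  exact h.isSymmSndFDerivAt (by simp) _ _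

end PartialDerivatives

section Burgers

variable {u : ℝ → ℝ → ℝ} {x y : ℝ}

noncomputable def burgers (u : ℝ → ℝ → ℝ) (x t : ℝ) : ℝ :=
  partialSnd u x t + u x t * partialFst u x t

theorem partialFst_burgers (h : ContDiffAt ℝ 2 (uncurry u) (x, y)) :
    partialFst (burgers u) x y = partialFst (partialSnd u) x y
      + partialFst u x y * partialFst u x y + u x y * partialFst (partialFst u) x y := by
  have hu := h.differentiableAt two_ne_zero
  have hux := h.hasFDerivAt_uncurry_partialFst.differentiableAt
  have hut := h.hasFDerivAt_uncurry_partialSnd.differentiableAt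
  rw [add_assoc]
  exact (hut.hasDerivAt_partialFst.add
    (hu.hasDerivAt_partialFst.mul hux.hasDerivAt_partialFst)).deriv

theorem partialSnd_burgers (h : ContDiffAt ℝ 2 (uncurry u) (x, y)) :
    partialSnd (burgers u) x y = partialSnd (partialSnd u) x y
      + partialSnd u x y * partialFst u x y + u x y * partialSnd (partialFst u) x y := by
  have hu := h.differentiableAt two_ne_zero
  have hux := h.hasFDerivAt_uncurry_partialFst.differentiableAt
  have hut := h.hasFDerivAt_uncurry_partialSnd.differentiableAt
  rw [add_assoc]
  exact (hut.hasDerivAt_partialSnd.add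
    (hu.hasDerivAt_partialSnd.mul hux.hasDerivAt_partialSnd)).deriv

theorem hessian_det_eq_of_burgers_eventuallyEq_zero (h : ContDiffAt ℝ 2 (uncurry u) (x, y))
    (hB : uncurry (burgers u) =ᶠ[𝓝 (x, y)] 0) :
    partialFst (partialFst u) x y * partialSnd (partialSnd u) x y
      - partialFst (partialSnd u) x y ^ 2 = -partialFst u x y ^ 4 := by
  have h0 : burgers u x y = 0 := hB.eq_of_nhds
  have hx := partialFst_eq_zero_of_eventuallyEq_zero hB
  have ht := partialSnd_eq_zero_of_eventuallyEq_zero hB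
  rw [partialFst_burgers h] at hx
  rw [partialSnd_burgers h, ← partialFst_partialSnd_eq_partialSnd_partialFst h] at ht
  unfold burgers at h0
  linear_combination partialFst (partialFst u) x y * ht
    + (partialFst u x y ^ 2 - partialFst (partialSnd u) x y) * hx
    - partialFst (partialFst u) x y * partialFst u x y * h0

end Burgers

/-- For a C² solution of the Burgers equation on an open set `Ω ⊆ ℝ²`, the Hessian
determinant satisfies `∂ₓ²u ∂ₜ²u - (∂ₓ∂ₜu)² = -(∂ₓu)⁴`; consequently the Gauss
curvature of the graph surface equals `-(∂ₓu)⁴ / (1 + (∂ₓu)² + (∂ₜu)²)²`. -/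
theorem burgers_graph_gauss_curvature
    (u : ℝ → ℝ → ℝ) (Ω : Set (ℝ × ℝ)) (hΩ : IsOpen Ω)
    (hreg : ContDiffOn ℝ 2 (fun p : ℝ × ℝ => u p.1 p.2) Ω)
    (heq : ∀ p : ℝ × ℝ, p ∈ Ω →
      deriv (fun t => u p.1 t) p.2 + u p.1 p.2 * deriv (fun x => u x p.2) p.1 = 0) :
    ∀ p : ℝ × ℝ, p ∈ Ω →
      deriv (fun x => deriv (fun x' => u x' p.2) x) p.1
          * deriv (fun t => deriv (fun t' => u p.1 t') t) p.2
        - deriv (fun x => deriv (fun t => u x t) p.2) p.1 ^ 2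
      = -deriv (fun x => u x p.2) p.1 ^ 4 ∧
      (deriv (fun x => deriv (fun x' => u x' p.2) x) p.1
          * deriv (fun t => deriv (fun t' => u p.1 t') t) p.2
        - deriv (fun x => deriv (fun t => u x t) p.2) p.1 ^ 2)
        / (1 + deriv (fun x => u x p.2) p.1 ^ 2
            + deriv (fun t => u p.1 t) p.2 ^ 2) ^ 2
      = -deriv (fun x => u x p.2) p.1 ^ 4
        / (1 + deriv (fun x => u x p.2) p.1 ^ 2
            + deriv (fun t => u p.1 t) p.2 ^ 2) ^ 2 := by
  intro p hp
  have hu : ContDiffAt ℝ 2 (uncurry u) p := hreg.contDiffAt (hΩ.mem_nhds hp)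
  have hB : uncurry (burgers u) =ᶠ[𝓝 p] 0 := eventually_of_mem (hΩ.mem_nhds hp) heq
  have hdet : deriv (fun x => deriv (fun x' => u x' p.2) x) p.1
        * deriv (fun t => deriv (fun t' => u p.1 t') t) p.2
      - deriv (fun x => deriv (fun t => u x t) p.2) p.1 ^ 2
      = -deriv (fun x => u x p.2) p.1 ^ 4 :=
    hessian_det_eq_of_burgers_eventuallyEq_zero hu hB
  exact ⟨hdet, by rw [hdet]⟩
end
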